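/- arXiv:2002.10039 — 7 statements merged into one kernel-verified Lean document; each statement's English description precedes it below -/
import Mathlib

section
/- Let G be a connected graph, R ≥ 1, and let J = P₁ ∪ P₂ ∪ P₃ be an R-tripod in G with root v and leaf endpoints v₁, v₂, v₃. Then any non-contractive embedding f : V(J) → ℝ of the tripod (with respect to the shortest-path metric of J) has expansion at least 2R; consequently any c-embedding of J into the line satisfies c ≥ 2R. -/
/-!
Order the three leaves by their images under `f`, and let `m` be the middle one. The walk
from one outer leaf to the other through the root stays in the two legs that avoid `m`, so all
of its vertices are at distance at least `R` from `m`; as `f` is non-contractive, their images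
avoid the open interval `(f m - R, f m + R)`. The walk starts below this interval and ends
above it, so one of its edges jumps across it and is stretched by at least `2R`.
-/

open Set

namespace SimpleGraph

variable {V W : Type*} {G : SimpleGraph V}

lemma Reachable.dist_map_le {H : SimpleGraph W} (φ : H →g G) {x y : W} (h : H.Reachable x y) :
    G.dist (φ x) (φ y) ≤ H.dist x y := by
  obtain ⟨w, hw⟩ := h.exists_walk_length_eq_dist
  calc G.dist (φ x) (φ y) ≤ (w.map φ).length := dist_le _
    _ = H.dist x y := by rw [Walk.length_map, hw]

lemma Walk.exists_adj_le_of_forall_le_or_le {α : Type*} [LinearOrder α] {H : SimpleGraph W}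
    {a b : W} (w : H.Walk a b) (f : W → α) {lo hi : α} (hlt : lo < hi)
    (ha : f a ≤ lo) (hb : hi ≤ f b) (hgap : ∀ u ∈ w.support, f u ≤ lo ∨ hi ≤ f u) :
    ∃ x y, H.Adj x y ∧ f x ≤ lo ∧ hi ≤ f y := by
  obtain ⟨d, hd, hlo, hnlo⟩ :=
    w.exists_boundary_dart {u | f u ≤ lo} ha (not_le.2 (hlt.trans_le hb))
  exact ⟨d.fst, d.snd, d.adj, hlo,
    (hgap _ (w.dart_snd_mem_support_of_mem_darts hd)).resolve_left hnlo⟩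

lemma exists_mem_uIcc_of_three {α : Type*} [LinearOrder α] (x y z : α) :
    x ∈ uIcc y z ∨ y ∈ uIcc x z ∨ z ∈ uIcc x y := by
  simp only [mem_uIcc]
  rcases le_total x y with h₁ | h₁ <;> rcases le_total y z with h₂ | h₂ <;>
    rcases le_total x z with h₃ | h₃ <;> simp [*]

namespace Subgraph

lemma Connected.sup {H K : G.Subgraph} (hH : H.Connected) (hK : K.Connected) {v : V}
    (hvH : v ∈ H.verts) (hvK : v ∈ K.verts) : (H ⊔ K).Connected :=
  connected_sup hH.preconnected hK.preconnected ⟨v, hvH, hvK⟩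

variable {J : G.Subgraph} {f : J.verts → ℝ}

lemma le_abs_sub_of_le_dist (hJ : J.coe.Connected)
    (hnc : ∀ x y : J.verts, (J.coe.dist x y : ℝ) ≤ |f x - f y|)
    {R : ℕ} {x y : J.verts} (hxy : R ≤ G.dist x y) : (R : ℝ) ≤ |f x - f y| :=
  calc (R : ℝ) ≤ G.dist x y := by exact_mod_cast hxy
    _ ≤ J.coe.dist x y := by exact_mod_cast (hJ x y).dist_map_le J.hom
    _ ≤ |f x - f y| := hnc x y

lemma exists_adj_two_mul_le_abs_sub (hJ : J.coe.Connected)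
    (hnc : ∀ x y : J.verts, (J.coe.dist x y : ℝ) ≤ |f x - f y|)
    {K : G.Subgraph} (hKJ : K ≤ J) (hK : K.Connected) {R : ℕ} (hR : 0 < R)
    {m a b : V} (hm : m ∈ J.verts) (ha : a ∈ K.verts) (hb : b ∈ K.verts)
    (hfar : ∀ u ∈ K.verts, R ≤ G.dist m u)
    (hmid : f ⟨m, hm⟩ ∈ uIcc (f ⟨a, hKJ.1 ha⟩) (f ⟨b, hKJ.1 hb⟩)) :
    ∃ x y : J.verts, J.coe.Adj x y ∧ (2 * R : ℝ) ≤ |f x - f y| := by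
  set t := f ⟨m, hm⟩
  have hR' : (0 : ℝ) < R := by exact_mod_cast hR
  let g : K.verts → ℝ := fun u => f (inclusion hKJ u)
  have hgap : ∀ u : K.verts, g u ≤ t - R ∨ t + R ≤ g u := fun u => by
    have := le_abs_sub_of_le_dist hJ hnc (x := ⟨m, hm⟩) (y := inclusion hKJ u) (hfar u u.2)
    rcases le_abs'.1 this with h | h
    exacts [Or.inr (by linarith), Or.inl (by linarith)]
  obtain ⟨p, q, hp, hq⟩ : ∃ p q : K.verts, g p ≤ t ∧ t ≤ g q := by
    rcases mem_uIcc.1 hmid with h | h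
    exacts [⟨⟨a, ha⟩, ⟨b, hb⟩, h⟩, ⟨⟨b, hb⟩, ⟨a, ha⟩, h⟩]
  obtain ⟨x, y, hxy, hx, hy⟩ := (hK.coe p q).some.exists_adj_le_of_forall_le_or_le g
    (by linarith : t - R < t + R) ((hgap p).resolve_right (by linarith))
    ((hgap q).resolve_left (by linarith)) fun u _ => hgap u
  refine ⟨_, _, (inclusion hKJ).map_adj hxy, ?_⟩
  rw [abs_sub_comm]
  exact le_abs.2 (Or.inl (by linarith))

end Subgraph

lemma Walk.exists_adj_two_mul_le_abs_sub_of_legs {J : G.Subgraph} {f : J.verts → ℝ}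
    (hJ : J.coe.Connected) (hnc : ∀ x y : J.verts, (J.coe.dist x y : ℝ) ≤ |f x - f y|)
    {R : ℕ} (hR : 0 < R) {v a b m : V} {pa : G.Walk v a} {pb : G.Walk v b}
    (hpa : pa.toSubgraph ≤ J) (hpb : pb.toSubgraph ≤ J) {hm : m ∈ J.verts}
    (hma : ∀ u ∈ pa.support, R ≤ G.dist m u) (hmb : ∀ u ∈ pb.support, R ≤ G.dist m u)
    (hmid : f ⟨m, hm⟩ ∈ uIcc (f ⟨a, hpa.1 pa.end_mem_verts_toSubgraph⟩)
      (f ⟨b, hpb.1 pb.end_mem_verts_toSubgraph⟩)) :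
    ∃ x y : J.verts, J.coe.Adj x y ∧ (2 * R : ℝ) ≤ |f x - f y| := by
  refine Subgraph.exists_adj_two_mul_le_abs_sub hJ hnc (sup_le hpa hpb)
    (pa.toSubgraph_connected.sup pb.toSubgraph_connected pa.start_mem_verts_toSubgraph
      pb.start_mem_verts_toSubgraph)
    hR hm (Or.inl pa.end_mem_verts_toSubgraph) (Or.inr pb.end_mem_verts_toSubgraph) ?_ hmid
  rintro u (hu | hu)
  exacts [hma u (pa.mem_verts_toSubgraph.1 hu), hmb u (pb.mem_verts_toSubgraph.1 hu)]

end SimpleGraph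

open SimpleGraph in
theorem tripod_noncontractive_embedding_expansion_general {V : Type*}
    (G : SimpleGraph V) (R : ℕ) (hR : 1 ≤ R)
    (v v₁ v₂ v₃ : V)
    (p₁ : G.Walk v v₁) (p₂ : G.Walk v v₂) (p₃ : G.Walk v v₃)
    (h12 : ∀ u ∈ p₂.support, R ≤ G.dist v₁ u)
    (h13 : ∀ u ∈ p₃.support, R ≤ G.dist v₁ u)
    (h21 : ∀ u ∈ p₁.support, R ≤ G.dist v₂ u)
    (h23 : ∀ u ∈ p₃.support, R ≤ G.dist v₂ u)
    (h31 : ∀ u ∈ p₁.support, R ≤ G.dist v₃ u)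
    (h32 : ∀ u ∈ p₂.support, R ≤ G.dist v₃ u)
    (J : G.Subgraph) (hJ : J = p₁.toSubgraph ⊔ p₂.toSubgraph ⊔ p₃.toSubgraph)
    (f : J.verts → ℝ)
    (hnc : ∀ x y : J.verts, (J.coe.dist x y : ℝ) ≤ |f x - f y|) :
    ∃ x y : J.verts, x ≠ y ∧ (2 * R : ℝ) * J.coe.dist x y ≤ |f x - f y| := by
  suffices ∃ x y : J.verts, J.coe.Adj x y ∧ (2 * R : ℝ) ≤ |f x - f y| by
    obtain ⟨x, y, hxy, h⟩ := this
    exact ⟨x, y, hxy.ne, by rwa [dist_eq_one_iff_adj.2 hxy, Nat.cast_one, mul_one]⟩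
  have hs₁ : p₁.toSubgraph ≤ J := hJ ▸ le_sup_left.trans le_sup_left
  have hs₂ : p₂.toSubgraph ≤ J := hJ ▸ le_sup_right.trans le_sup_left
  have hs₃ : p₃.toSubgraph ≤ J := hJ ▸ le_sup_right
  have hJc : J.coe.Connected := hJ ▸
    ((p₁.toSubgraph_connected.sup p₂.toSubgraph_connected p₁.start_mem_verts_toSubgraph
      p₂.start_mem_verts_toSubgraph).sup p₃.toSubgraph_connected
      (Or.inl p₁.start_mem_verts_toSubgraph) p₃.start_mem_verts_toSubgraph).coe
  rcases exists_mem_uIcc_of_three (f ⟨v₁, hs₁.1 p₁.end_mem_verts_toSubgraph⟩)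
    (f ⟨v₂, hs₂.1 p₂.end_mem_verts_toSubgraph⟩)
    (f ⟨v₃, hs₃.1 p₃.end_mem_verts_toSubgraph⟩)
    with h | h | h
  · exact Walk.exists_adj_two_mul_le_abs_sub_of_legs hJc hnc hR hs₂ hs₃ h12 h13 h
  · exact Walk.exists_adj_two_mul_le_abs_sub_of_legs hJc hnc hR hs₁ hs₃ h21 h23 h
  · exact Walk.exists_adj_two_mul_le_abs_sub_of_legs hJc hnc hR hs₁ hs₂ h31 h32 h

/-- If `J = P₁ ∪ P₂ ∪ P₃` is an `R`-tripod in a connected graph `G`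
(three paths sharing the root `v`, with leaf endpoints `v₁, v₂, v₃`, each leaf at
`G`-distance at least `R` from every vertex of the other two paths), then every
non-contractive embedding `f : V(J) → ℝ` (w.r.t. the shortest-path metric of `J`)
has expansion at least `2R`. -/
theorem tripod_noncontractive_embedding_expansion {V : Type*} [Fintype V]
    (G : SimpleGraph V) (hG : G.Connected) (R : ℕ) (hR : 1 ≤ R)
    (v v₁ v₂ v₃ : V)
    (p₁ : G.Walk v v₁) (p₂ : G.Walk v v₂) (p₃ : G.Walk v v₃)
    (hp₁ : p₁.IsPath) (hp₂ : p₂.IsPath) (hp₃ : p₃.IsPath)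
    (h12 : ∀ u ∈ p₂.support, R ≤ G.dist v₁ u)
    (h13 : ∀ u ∈ p₃.support, R ≤ G.dist v₁ u)
    (h21 : ∀ u ∈ p₁.support, R ≤ G.dist v₂ u)
    (h23 : ∀ u ∈ p₃.support, R ≤ G.dist v₂ u)
    (h31 : ∀ u ∈ p₁.support, R ≤ G.dist v₃ u)
    (h32 : ∀ u ∈ p₂.support, R ≤ G.dist v₃ u)
    (J : G.Subgraph) (hJ : J = p₁.toSubgraph ⊔ p₂.toSubgraph ⊔ p₃.toSubgraph)
    (f : J.verts → ℝ)
    (hnc : ∀ x y : J.verts, (J.coe.dist x y : ℝ) ≤ |f x - f y|) :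
    ∃ x y : J.verts, x ≠ y ∧ (2 * R : ℝ) * J.coe.dist x y ≤ |f x - f y| :=
  tripod_noncontractive_embedding_expansion_general G R hR v v₁ v₂ v₃ p₁ p₂ p₃ h12 h13 h21 h23 h31
    h32 J hJ f hnc
end

section
/- Let G be a connected graph, c > 0, and let f : V(G) → ℝ be a non-contracting embedding with expansion at most c (so d_G(x,y) ≤ |f(x)−f(y)| ≤ c·d_G(x,y)). Let Z = {z₁,...,z_m} ⊆ V(G) be consecutive with respect to f, with f(z₁) < ... < f(z_m), and suppose f(z_m) − f(z₁) ≥ c. Then Z is a vertex separator in G: the sets X = {x : f(x) < f(z₁)} and Y = {y : f(y) > f(z_m)} are not connected to each other in G \ Z. -/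
/-- Let `G` be a connected graph and `f` a non-contracting
embedding with expansion at most `c`. Let `Z` be consecutive with respect to `f`,
with `f`-minimum `z₁` and `f`-maximum `z_m`, and `f z_m − f z₁ ≥ c`. Then `Z`
separates `X = {x : f x < f z₁}` from `Y = {y : f y > f z_m}` in `G \ Z`. -/
theorem consecutive_set_is_separator {V : Type*} [Fintype V]
    (G : SimpleGraph V) (hG : G.Connected) (c : ℝ) (hc : 0 < c)
    (f : V → ℝ)
    (hnc : ∀ x y : V, (G.dist x y : ℝ) ≤ |f x - f y|)
    (hexp : ∀ x y : V, |f x - f y| ≤ c * G.dist x y)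
    (Z : Set V) (z₁ zm : V) (hz₁ : z₁ ∈ Z) (hzm : zm ∈ Z)
    (hmin : ∀ z ∈ Z, f z₁ ≤ f z) (hmax : ∀ z ∈ Z, f z ≤ f zm)
    (hconsec : ∀ w : V, w ∉ Z → f w < f z₁ ∨ f zm < f w)
    (hgap : c ≤ f zm - f z₁) :
    ∀ (x y : V) (hx : f x < f z₁) (hy : f zm < f y)
      (hxZ : x ∉ Z) (hyZ : y ∉ Z),
      ¬ (G.induce {v : V | v ∉ Z}).Reachable ⟨x, hxZ⟩ ⟨y, hyZ⟩ := by
  have key : ∀ (a b : {v : V | v ∉ Z}),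
      (G.induce {v : V | v ∉ Z}).Walk a b → f a.1 < f z₁ → f b.1 < f z₁ := by
    intro a b w
    induction w with
    | nil => exact fun h => h
    | @cons u v b hadj _ ih =>
      intro hu
      apply ih
      have hGadj : G.Adj u.1 v.1 := hadj
      have hd : G.dist u.1 v.1 = 1 := SimpleGraph.dist_eq_one_iff_adj.mpr hGadj
      have hle : |f u.1 - f v.1| ≤ c := by
        have := hexp u.1 v.1
        rw [hd] at this
        simpa using this
      rcases hconsec v.1 v.2 with h | h
      · exact h
      · exfalso
        have : f v.1 - f u.1 > c := by
          have : f zm - f z₁ < f v.1 - f u.1 := by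
            have h1 : f u.1 < f z₁ := hu
            linarith
          linarith
        have h2 : f v.1 - f u.1 ≤ |f u.1 - f v.1| := by
          rw [abs_sub_comm]
          exact le_abs_self _
        linarith
  intro x y hx hy hxZ hyZ hr
  obtain ⟨w⟩ := hr
  have := key ⟨x, hxZ⟩ ⟨y, hyZ⟩ w hx
  simp only at this
  linarith
end

section
/- Let G be a connected graph admitting a (k,c)-embedding into the line, witnessed by an outlier set Z with |Z| = k such that G \ Z admits a c-embedding f into ℝ. Then every induced subgraph H of G on h vertices contains a 2/3-balanced vertex separator of size at most c + |Z ∩ V(H)|. -/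
private lemma gap_lemma' (T : Finset ℝ) {n : ℕ} (hn : T.card = n)
    (hsep : ∀ x ∈ T, ∀ y ∈ T, x ≠ y → 1 ≤ |x - y|) :
    ∀ (d : ℕ) (i i' : Fin n), (i' : ℕ) = (i : ℕ) + d →
      (d : ℝ) ≤ (T.orderIsoOfFin hn i' : ℝ) - (T.orderIsoOfFin hn i : ℝ) := by
  intro d
  induction d with
  | zero =>
    intro i i' hi
    have : i' = i := Fin.ext (by omega)
    simp [this]
  | succ d ih =>
    intro i i' hi
    have hmidlt : (i : ℕ) + d < n := by omega
    set mid : Fin n := ⟨(i : ℕ) + d, hmidlt⟩ with hmid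
    have hlt : mid < i' := by
      rw [Fin.lt_def]
      have : (mid : ℕ) = (i : ℕ) + d := rfl
      omega
    have h1 : (T.orderIsoOfFin hn mid : ℝ) < (T.orderIsoOfFin hn i' : ℝ) := by
      exact_mod_cast (T.orderIsoOfFin hn).strictMono hlt
    have h2 : (1 : ℝ) ≤ |(T.orderIsoOfFin hn i' : ℝ) - (T.orderIsoOfFin hn mid : ℝ)| :=
      hsep _ (T.orderIsoOfFin hn i').2 _ (T.orderIsoOfFin hn mid).2 (by linarith)
    rw [abs_of_pos (by linarith)] at h2
    have h3 := ih i mid rfl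
    push_cast
    linarith

private lemma rank_lemma' {α : Type*} (g : α → ℝ) (C : Set α) (hfin : C.Finite)
    (hsep : ∀ u ∈ C, ∀ w ∈ C, u ≠ w → 1 ≤ |g u - g w|) {n : ℕ} (hn : C.ncard = n)
    {j1 j2 : ℕ} (hj1 : j1 < n) (hj2 : j2 < n) :
    ∃ (ρ : α → ℕ) (a b : ℝ), Set.InjOn ρ C ∧
      (∀ u ∈ C, ρ u < n) ∧
      (∀ u ∈ C, (g u < a ↔ ρ u < j1)) ∧
      (∀ u ∈ C, (b < g u ↔ j2 < ρ u)) ∧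
      (∀ u ∈ C, ∀ w ∈ C, ∀ d : ℕ, ρ w = ρ u + d → (d : ℝ) ≤ g w - g u) := by
  classical
  have hginj : Set.InjOn g C := by
    intro u hu w hw hEq
    by_contra hne
    have := hsep u hu w hw hne
    rw [hEq] at this
    simp at this
    linarith
  set T : Finset ℝ := (hfin.image g).toFinset with hTdef
  have hTmem : ∀ u ∈ C, g u ∈ T := by
    intro u hu
    rw [hTdef, Set.Finite.mem_toFinset]
    exact ⟨u, hu, rfl⟩
  have hTmem' : ∀ x ∈ T, ∃ u ∈ C, g u = x := by
    intro x hx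
    rw [hTdef, Set.Finite.mem_toFinset] at hx
    exact hx
  have hTcard : T.card = n := by
    rw [← hn, hTdef, ← Set.ncard_eq_toFinset_card (g '' C) (hfin.image g)]
    exact Set.ncard_image_of_injOn hginj
  have hsepT : ∀ x ∈ T, ∀ y ∈ T, x ≠ y → 1 ≤ |x - y| := by
    intro x hx y hy hxy
    obtain ⟨u, hu, rfl⟩ := hTmem' x hx
    obtain ⟨w, hw, rfl⟩ := hTmem' y hy
    exact hsep u hu w hw (fun hEq => hxy (by rw [hEq]))
  have hnpos : 0 < n := by omega
  set e := T.orderIsoOfFin hTcard with hedef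
  have hval : ∀ u ∈ C, ∃ i : Fin n,
      (if huT : g u ∈ T then ((e.symm ⟨g u, huT⟩ : Fin n) : ℕ) else 0) = (i : ℕ) ∧
      (e i : ℝ) = g u := by
    intro u hu
    refine ⟨e.symm ⟨g u, hTmem u hu⟩, by rw [dif_pos (hTmem u hu)], ?_⟩
    rw [OrderIso.apply_symm_apply]
  refine ⟨fun u => if huT : g u ∈ T then ((e.symm ⟨g u, huT⟩ : Fin n) : ℕ) else 0,
    (e ⟨j1, hj1⟩ : ℝ), (e ⟨j2, hj2⟩ : ℝ), ?_, ?_, ?_, ?_, ?_⟩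
  · intro u hu w hw hEq
    obtain ⟨i, hi1, hi2⟩ := hval u hu
    obtain ⟨i', hi1', hi2'⟩ := hval w hw
    have hEq2 : (i : ℕ) = (i' : ℕ) := by rw [← hi1, ← hi1']; exact hEq
    apply hginj hu hw
    rw [← hi2, ← hi2']
    congr 2
    exact Fin.ext hEq2
  · intro u hu
    obtain ⟨i, hi1, hi2⟩ := hval u hu
    simp only
    rw [hi1]
    exact i.isLt
  · intro u hu
    obtain ⟨i, hi1, hi2⟩ := hval u hu
    simp only
    rw [hi1, ← hi2]
    constructor
    · intro hlt
      have h' : e i < e ⟨j1, hj1⟩ := by exact_mod_cast hlt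
      exact e.lt_iff_lt.mp h'
    · intro hlt
      have h' : e i < e ⟨j1, hj1⟩ := e.lt_iff_lt.mpr (by rw [Fin.lt_def]; exact hlt)
      exact_mod_cast h'
  · intro u hu
    obtain ⟨i, hi1, hi2⟩ := hval u hu
    simp only
    rw [hi1, ← hi2]
    constructor
    · intro hlt
      have h' : e ⟨j2, hj2⟩ < e i := by exact_mod_cast hlt
      have := e.lt_iff_lt.mp h'
      rw [Fin.lt_def] at this
      exact this
    · intro hlt
      have h' : e ⟨j2, hj2⟩ < e i := e.lt_iff_lt.mpr (by rw [Fin.lt_def]; exact hlt)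
      exact_mod_cast h'
  · intro u hu w hw d hd
    obtain ⟨i, hi1, hi2⟩ := hval u hu
    obtain ⟨i', hi1', hi2'⟩ := hval w hw
    have hd2 : (i' : ℕ) = (i : ℕ) + d := by rw [← hi1, ← hi1']; exact hd
    rw [← hi2, ← hi2']
    exact gap_lemma' T hTcard hsepT d i i' hd2

private lemma reach_mono' {V : Type*} (G : SimpleGraph V) {A B : Set V} (hAB : A ⊆ B)
    {u v : ↥A} (h : (G.induce A).Reachable u v) :
    (G.induce B).Reachable ⟨u.1, hAB u.2⟩ ⟨v.1, hAB v.2⟩ := by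
  exact h.map (⟨fun x => ⟨x.1, hAB x.2⟩, fun {a b} hab => hab⟩ : G.induce A →g G.induce B)

private lemma reach_ind' {W : Type*} (H : SimpleGraph W) (P : W → Prop)
    (hP : ∀ a b, H.Adj a b → P a → P b) {u v : W} (h : H.Reachable u v) (hu : P u) : P v := by
  obtain ⟨w⟩ := h
  induction w with
  | nil => exact hu
  | cons hadj p ih => exact ih (hP _ _ hadj hu)

set_option maxHeartbeats 1000000 in
/-- Suppose `G` admits a `(k,c)`-embedding into the line,
witnessed by an outlier set `Z` of size `k` and a non-contracting embedding `f`
of `G \ Z` with expansion at most `c`. Then every induced subgraph `H = G[s]`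
contains a `2/3`-balanced vertex separator of size at most `c + |Z ∩ s|`:
some `S ⊆ s` such that every connected component of `G[s \ S]` has at most
`(2/3)·|s|` vertices. -/
theorem balanced_separator_of_outlier_embedding {V : Type*} [Fintype V]
    (G : SimpleGraph V) (hG : G.Connected) (k : ℕ) (c : ℝ) (hc : 1 ≤ c)
    (Z : Set V) (hZcard : Z.ncard = k)
    (f : {v : V // v ∉ Z} → ℝ)
    (hemb : ∀ x y : {v : V // v ∉ Z},
      (G.induce {v : V | v ∉ Z}).Reachable x y →
        ((G.induce {v : V | v ∉ Z}).dist x y : ℝ) ≤ |f x - f y| ∧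
        |f x - f y| ≤ c * (G.induce {v : V | v ∉ Z}).dist x y)
    (s : Set V) :
    ∃ S : Set V, S ⊆ s ∧ (S.ncard : ℝ) ≤ c + (Z ∩ s).ncard ∧
      ∀ v : ↥(s \ S),
        ({u : ↥(s \ S) | (G.induce (s \ S)).Reachable v u}.ncard : ℝ) ≤
          (2 / 3 : ℝ) * s.ncard := by
  classical
  set A : Set V := s \ Z with hAdef
  set h : ℕ := s.ncard with hhdef
  have hh0 : (0 : ℝ) ≤ (h : ℝ) := Nat.cast_nonneg _
  by_cases hall : ∀ v : ↥A,
      ({u : ↥A | (G.induce A).Reachable v u}.ncard : ℝ) ≤ (2 / 3 : ℝ) * (h : ℝ)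
  · refine ⟨Z ∩ s, Set.inter_subset_right, ?_, ?_⟩
    · have : (0 : ℝ) ≤ ((Z ∩ s).ncard : ℝ) := Nat.cast_nonneg _
      linarith
    · have hset0 : s \ (Z ∩ s) = A := by rw [hAdef]; ext x; simp only [Set.mem_diff, Set.mem_inter_iff]; tauto
      rw [hset0]
      exact hall
  push_neg at hall
  obtain ⟨v₀, hv₀⟩ := hall
  set C : Set ↥A := {u : ↥A | (G.induce A).Reachable v₀ u} with hCdef
  set n : ℕ := C.ncard with hndef
  have hCbig : (2 / 3 : ℝ) * (h : ℝ) < (n : ℝ) := hv₀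
  -- the embedding restricted to A
  set g : ↥A → ℝ := fun u => f ⟨u.1, u.2.2⟩ with hgdef
  -- edges stretch at most c
  have hedge : ∀ u w : ↥A, G.Adj u.1 w.1 → |g u - g w| ≤ c := by
    intro u w huw
    have hadj : (G.induce {v : V | v ∉ Z}).Adj ⟨u.1, u.2.2⟩ ⟨w.1, w.2.2⟩ := huw
    have hr := hadj.reachable
    have hd : (G.induce {v : V | v ∉ Z}).dist ⟨u.1, u.2.2⟩ ⟨w.1, w.2.2⟩ ≤ 1 := by
      simpa using SimpleGraph.dist_le hadj.toWalk
    have h2 := (hemb _ _ hr).2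
    have hd' : ((G.induce {v : V | v ∉ Z}).dist ⟨u.1, u.2.2⟩ ⟨w.1, w.2.2⟩ : ℝ) ≤ 1 := by
      exact_mod_cast hd
    calc |g u - g w| ≤ c * ((G.induce {v : V | v ∉ Z}).dist ⟨u.1, u.2.2⟩ ⟨w.1, w.2.2⟩ : ℝ) := h2
      _ ≤ c * 1 := by nlinarith
      _ = c := by ring
  -- distinct vertices of C have values at least 1 apart
  have hsep : ∀ u ∈ C, ∀ w ∈ C, u ≠ w → 1 ≤ |g u - g w| := by
    intro u hu w hw hne
    have hr : (G.induce A).Reachable u w := (hu : (G.induce A).Reachable v₀ u).symm.trans hw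
    have hr' : (G.induce {v : V | v ∉ Z}).Reachable ⟨u.1, u.2.2⟩ ⟨w.1, w.2.2⟩ :=
      reach_mono' G (fun x hx => hx.2) hr
    have hne' : (⟨u.1, u.2.2⟩ : {v : V // v ∉ Z}) ≠ ⟨w.1, w.2.2⟩ := by
      intro hEq
      exact hne (Subtype.ext (congrArg (Subtype.val : {v : V // v ∉ Z} → V) hEq))
    have hpos : 1 ≤ (G.induce {v : V | v ∉ Z}).dist ⟨u.1, u.2.2⟩ ⟨w.1, w.2.2⟩ :=
      hr'.pos_dist_of_ne hne'
    have h1 := (hemb _ _ hr').1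
    have : (1 : ℝ) ≤ ((G.induce {v : V | v ∉ Z}).dist ⟨u.1, u.2.2⟩ ⟨w.1, w.2.2⟩ : ℝ) := by
      exact_mod_cast hpos
    linarith
  -- numeric parameters
  have hv₀C : v₀ ∈ C := SimpleGraph.Reachable.refl v₀
  have hn1 : 1 ≤ n := (Set.ncard_pos (Set.toFinite C)).mpr ⟨v₀, hv₀C⟩
  have huniv : (Set.univ : Set ↥A).ncard = A.ncard := by
    rw [Set.ncard_univ, Nat.card_coe_set_eq]
  have hAs : A.ncard ≤ h := Set.ncard_le_ncard Set.diff_subset (Set.toFinite s)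
  have hnh : n ≤ h := by
    calc n ≤ (Set.univ : Set ↥A).ncard :=
            Set.ncard_le_ncard (Set.subset_univ C) (Set.toFinite _)
      _ = A.ncard := huniv
      _ ≤ h := hAs
  set m : ℕ := ⌊c⌋₊ with hmdef
  have hm1 : 1 ≤ m := by
    rw [hmdef]
    exact Nat.le_floor (by exact_mod_cast hc)
  have hmc : (m : ℝ) ≤ c := Nat.floor_le (by linarith)
  have hcm : c < (m : ℝ) + 1 := Nat.lt_floor_add_one c
  set m' : ℕ := min m n with hm'def
  have hm'm : m' ≤ m := min_le_left _ _
  have hm'n : m' ≤ n := min_le_right _ _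
  have hm'1 : 1 ≤ m' := le_min hm1 hn1
  set q : ℕ := 2 * h / 3 with hqdef
  have hq3 : 3 * q ≤ 2 * h := by rw [hqdef]; omega
  have hq3' : 2 * h < 3 * (q + 1) := by rw [hqdef]; omega
  set j : ℕ := min (n - m') q with hjdef
  have hjle : j ≤ n - m' := min_le_left _ _
  have hjq : j ≤ q := min_le_right _ _
  have hjm'n : j + m' ≤ n := by omega
  have hjlt : j < n := by omega
  have hblt : j + m' - 1 < n := by omega
  -- the rank function and window thresholds
  obtain ⟨ρ, a, b, hρinj, hρlt, hiffL, hiffR, hgap⟩ :=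
    rank_lemma' g C (Set.toFinite C) hsep hndef.symm hjlt hblt
  set L : Set ↥A := {u | u ∈ C ∧ g u < a} with hLdef
  set Mset : Set ↥A := {u | u ∈ C ∧ ¬ g u < a ∧ ¬ b < g u} with hMdef
  set R : Set ↥A := {u | u ∈ C ∧ b < g u} with hRdef
  have htriC : ∀ u ∈ C, u ∉ Mset → u ∈ L ∨ u ∈ R := by
    intro u hu hM
    by_cases h1 : g u < a
    · exact Or.inl ⟨hu, h1⟩
    · by_cases h2 : b < g u
      · exact Or.inr ⟨hu, h2⟩
      · exact absurd ⟨hu, h1, h2⟩ hM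
  -- cardinality bounds on L, Mset, R
  have hLcard : L.ncard ≤ j := by
    have hmap : ∀ u ∈ L, ρ u ∈ (↑(Finset.Iio j) : Set ℕ) := by
      rintro u ⟨huC, hua⟩
      simp only [Finset.coe_Iio, Set.mem_Iio]
      exact (hiffL u huC).mp hua
    have := Set.ncard_le_ncard_of_injOn ρ hmap
      (fun u hu w hw hEq => hρinj hu.1 hw.1 hEq) (Set.toFinite _)
    rwa [Set.ncard_coe_finset, Nat.card_Iio] at this
  have hMcard : Mset.ncard ≤ m' := by
    have hmap : ∀ u ∈ Mset, ρ u ∈ (↑(Finset.Icc j (j + m' - 1)) : Set ℕ) := by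
      rintro u ⟨huC, hua, hub⟩
      simp only [Finset.coe_Icc, Set.mem_Icc]
      constructor
      · have := (hiffL u huC).not.mp hua
        omega
      · have := (hiffR u huC).not.mp hub
        omega
    have := Set.ncard_le_ncard_of_injOn ρ hmap
      (fun u hu w hw hEq => hρinj hu.1 hw.1 hEq) (Set.toFinite _)
    rw [Set.ncard_coe_finset, Nat.card_Icc] at this
    omega
  have hRcard : R.ncard ≤ n - j - m' := by
    have hmap : ∀ u ∈ R, ρ u ∈ (↑(Finset.Ioc (j + m' - 1) (n - 1)) : Set ℕ) := by
      rintro u ⟨huC, hub⟩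
      simp only [Finset.coe_Ioc, Set.mem_Ioc]
      refine ⟨(hiffR u huC).mp hub, ?_⟩
      have := hρlt u huC
      omega
    have := Set.ncard_le_ncard_of_injOn ρ hmap
      (fun u hu w hw hEq => hρinj hu.1 hw.1 hEq) (Set.toFinite _)
    rw [Set.ncard_coe_finset, Nat.card_Ioc] at this
    omega
  -- key separation: no edge between L and R
  have hLR : ∀ u ∈ L, ∀ w ∈ R, c < g w - g u := by
    intro u hu w hw
    have hρu : ρ u < j := (hiffL u hu.1).mp hu.2
    have hρw : j + m' - 1 < ρ w := (hiffR w hw.1).mp hw.2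
    rcases le_or_gt m n with hmn | hnm
    · have hm'eq : m' = m := min_eq_left hmn
      have hd : m' + 1 ≤ ρ w - ρ u := by omega
      have hgap' := hgap u hu.1 w hw.1 (ρ w - ρ u) (by omega)
      have hcast : ((m' : ℝ) + 1) ≤ ((ρ w - ρ u : ℕ) : ℝ) := by exact_mod_cast hd
      have hcm' : c < (m' : ℝ) + 1 := by rw [hm'eq]; exact hcm
      linarith
    · exfalso
      have hm'eq : m' = n := min_eq_right (le_of_lt hnm)
      omega
  -- the separator
  set img : Set V := Subtype.val '' Mset with himgdef
  have himgcard : img.ncard = Mset.ncard := Set.ncard_image_of_injective _ Subtype.val_injective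
  have himgs : img ⊆ s := by
    rintro _ ⟨u, _, rfl⟩
    exact u.2.1
  refine ⟨(Z ∩ s) ∪ img, Set.union_subset Set.inter_subset_right himgs, ?_, ?_⟩
  · have h1 : ((Z ∩ s) ∪ img).ncard ≤ (Z ∩ s).ncard + img.ncard := Set.ncard_union_le _ _
    have h2 : (img.ncard : ℝ) ≤ c := by
      rw [himgcard]
      have h3 : (Mset.ncard : ℝ) ≤ (m' : ℝ) := by exact_mod_cast hMcard
      have h4 : ((m' : ℕ) : ℝ) ≤ (m : ℝ) := by exact_mod_cast hm'm
      linarith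
    have h1' : (((Z ∩ s) ∪ img).ncard : ℝ) ≤ ((Z ∩ s).ncard : ℝ) + (img.ncard : ℝ) := by
      exact_mod_cast h1
    linarith
  · have hset : s \ ((Z ∩ s) ∪ img) = A \ img := by
      rw [hAdef]
      ext x
      simp only [Set.mem_diff, Set.mem_union, Set.mem_inter_iff]
      tauto
    rw [hset]
    intro v
    have hA'A : A \ img ⊆ A := Set.diff_subset
    set ψ : ↥(A \ img) → ↥A := fun x => ⟨x.1, hA'A x.2⟩ with hψdef
    have hψinj : Function.Injective ψ := fun x y hxy =>
      Subtype.ext (congrArg (Subtype.val : ↥A → V) hxy)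
    set Rv : Set ↥(A \ img) := {u | (G.induce (A \ img)).Reachable v u} with hRvdef
    have hRvcard : Rv.ncard = (ψ '' Rv).ncard :=
      (Set.ncard_image_of_injective _ hψinj).symm
    have hmapr : ∀ x y : ↥(A \ img), (G.induce (A \ img)).Reachable x y →
        (G.induce A).Reachable (ψ x) (ψ y) := fun x y hr => reach_mono' G hA'A hr
    have hnotM : ∀ x : ↥(A \ img), ψ x ∉ Mset := by
      intro x hM
      exact x.2.2 ⟨ψ x, hM, rfl⟩
    by_cases hvC : ψ v ∈ C
    · have hadjC : ∀ x y : ↥(A \ img), (G.induce (A \ img)).Adj x y → ψ x ∈ C → ψ y ∈ C := by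
        intro x y hxy hxC
        have hadjA : (G.induce A).Adj (ψ x) (ψ y) := hxy
        exact (hxC : (G.induce A).Reachable v₀ (ψ x)).trans hadjA.reachable
      have hadjL : ∀ x y : ↥(A \ img), (G.induce (A \ img)).Adj x y → ψ x ∈ L → ψ y ∈ L := by
        intro x y hxy hxL
        have hyC : ψ y ∈ C := hadjC x y hxy hxL.1
        rcases htriC (ψ y) hyC (hnotM y) with hyL | hyR
        · exact hyL
        · exfalso
          have hgt := hLR (ψ x) hxL (ψ y) hyR
          have hle := hedge (ψ x) (ψ y) hxy
          have : g (ψ y) - g (ψ x) ≤ |g (ψ x) - g (ψ y)| := by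
            rw [abs_sub_comm]; exact le_abs_self _
          linarith
      have hadjR : ∀ x y : ↥(A \ img), (G.induce (A \ img)).Adj x y → ψ x ∈ R → ψ y ∈ R := by
        intro x y hxy hxR
        have hyC : ψ y ∈ C := hadjC x y hxy hxR.1
        rcases htriC (ψ y) hyC (hnotM y) with hyL | hyR
        · exfalso
          have hgt := hLR (ψ y) hyL (ψ x) hxR
          have hle := hedge (ψ x) (ψ y) hxy
          have : g (ψ x) - g (ψ y) ≤ |g (ψ x) - g (ψ y)| := le_abs_self _
          linarith
        · exact hyR
      rcases htriC (ψ v) hvC (hnotM v) with hvL | hvR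
      · -- component inside L
        have hsub : ψ '' Rv ⊆ L := by
          rintro _ ⟨u, hu, rfl⟩
          exact reach_ind' (G.induce (A \ img)) (fun x => ψ x ∈ L) hadjL hu hvL
        have hcard : Rv.ncard ≤ j := by
          rw [hRvcard]
          exact le_trans (Set.ncard_le_ncard hsub (Set.toFinite _)) hLcard
        have h1 : (Rv.ncard : ℝ) ≤ (j : ℝ) := by exact_mod_cast hcard
        have h2 : (j : ℝ) ≤ (q : ℝ) := by exact_mod_cast hjq
        have h3 : 3 * (q : ℝ) ≤ 2 * (h : ℝ) := by exact_mod_cast hq3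
        linarith
      · -- component inside R
        have hsub : ψ '' Rv ⊆ R := by
          rintro _ ⟨u, hu, rfl⟩
          exact reach_ind' (G.induce (A \ img)) (fun x => ψ x ∈ R) hadjR hu hvR
        have hcard : Rv.ncard ≤ n - j - m' := by
          rw [hRvcard]
          exact le_trans (Set.ncard_le_ncard hsub (Set.toFinite _)) hRcard
        have h1 : (Rv.ncard : ℝ) ≤ ((n - j - m' : ℕ) : ℝ) := by exact_mod_cast hcard
        rcases le_or_gt (n - m') q with hcase | hcase
        · have hz : n - j - m' = 0 := by
            have : j = n - m' := min_eq_left hcase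
            omega
          rw [hz] at h1
          have h1' : (Rv.ncard : ℝ) ≤ 0 := by exact_mod_cast h1
          linarith
        · have hjeq : j = q := min_eq_right (le_of_lt hcase)
          have hm'eq : m' = m := by
            rcases le_total m n with h' | h'
            · exact min_eq_left h'
            · exfalso
              have : m' = n := min_eq_right h'
              omega
          have hnat : (n - j - m') + j + m' = n := by omega
          have hcast : ((n - j - m' : ℕ) : ℝ) = (n : ℝ) - (j : ℝ) - (m' : ℝ) := by
            have := congrArg (fun t : ℕ => (t : ℝ)) hnat
            push_cast at this
            linarith
          have hq3'' : 2 * (h : ℝ) < 3 * ((q : ℝ) + 1) := by exact_mod_cast hq3'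
          have hnh' : (n : ℝ) ≤ (h : ℝ) := by exact_mod_cast hnh
          have hm'1' : (1 : ℝ) ≤ (m' : ℝ) := by exact_mod_cast hm'1
          have hjeq' : (j : ℝ) = (q : ℝ) := by exact_mod_cast hjeq
          rw [hcast] at h1
          linarith
    · -- component disjoint from C
      set D : Set ↥A := {u : ↥A | (G.induce A).Reachable (ψ v) u} with hDdef
      have hsub : ψ '' Rv ⊆ D := by
        rintro _ ⟨u, hu, rfl⟩
        exact hmapr v u hu
      have hdisj : Disjoint C D := by
        rw [Set.disjoint_left]
        intro x hxC hxD
        exact hvC ((hxC : (G.induce A).Reachable v₀ x).trans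
          (hxD : (G.induce A).Reachable (ψ v) x).symm)
      have hCD : C.ncard + D.ncard ≤ h := by
        rw [← Set.ncard_union_eq hdisj (Set.toFinite _) (Set.toFinite _)]
        calc (C ∪ D).ncard ≤ (Set.univ : Set ↥A).ncard :=
              Set.ncard_le_ncard (Set.subset_univ _) (Set.toFinite _)
          _ = A.ncard := huniv
          _ ≤ h := hAs
      have hcard : Rv.ncard ≤ D.ncard := by
        rw [hRvcard]
        exact Set.ncard_le_ncard hsub (Set.toFinite _)
      have h1 : (Rv.ncard : ℝ) ≤ (D.ncard : ℝ) := by exact_mod_cast hcard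
      have h2 : (n : ℝ) + (D.ncard : ℝ) ≤ (h : ℝ) := by exact_mod_cast hCD
      linarith
end

section
/- Let G be a connected graph, c ≥ 1, k ≥ 0, such that G admits a (k,c)-embedding into the line, and let H be an R-minor of G for some R ≥ c. Then there exists a feedback vertex set X of H with |X| ≤ k, namely the set of net points whose Voronoi clusters intersect the outlier set. -/
/-!
Let `X` be the set of net points whose clusters meet `Y`. Distinct net points are more than
`R ≥ c` apart, so a vertex of `G ∖ Y` whose cluster is not that of the net point `t` is more than
`c / 2` from `t` in `G`, and, `f` being non-contracting, also on the line. Since an edge of `G ∖ Y`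
moves `f` by at most `c`, no edge between two other clusters crosses `f t`; as the clusters avoiding
`Y` are connected, no edge of `H ∖ X` crosses the image of a third net point of the same
component. Hence every edge of `H ∖ X` is a bridge: a detour would have to cross one of its ends.
-/

/-- The `R`-minor of `G` induced by a Voronoi partition. -/
def voronoiMinor {V : Type*} (G : SimpleGraph V) (N : Set V) (center : V → V) :
    SimpleGraph N where
  Adj u v := u ≠ v ∧ ∃ a b : V, G.Adj a b ∧ center a = ↑u ∧ center b = ↑v
  symm := by
    constructor
    rintro u v ⟨h, a, b, hab, ha, hb⟩
    exact ⟨h.symm, b, a, hab.symm, hb, ha⟩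
  loopless := by constructor; rintro u ⟨h, -⟩; exact h rfl

namespace SimpleGraph

variable {V W : Type*} {G : SimpleGraph V} {u v : V}

lemma Reachable.induction_on_adj {P : V → Prop} (h : G.Reachable u v) (hu : P u)
    (hP : ∀ ⦃a b⦄, G.Adj a b → P a → P b) : P v := by
  obtain ⟨w⟩ := h
  induction w with
  | nil => exact hu
  | cons hadj _ ih => exact ih (hP hadj hu)

lemma Reachable.map_of_forall_adj {G' : SimpleGraph W} (φ : V → W)
    (hφ : ∀ ⦃a b⦄, G.Adj a b → G'.Reachable (φ a) (φ b)) (h : G.Reachable u v) :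
    G'.Reachable (φ u) (φ v) :=
  h.induction_on_adj (P := fun z => G'.Reachable (φ u) (φ z)) (.refl _) fun _ _ hab hua =>
    hua.trans (hφ hab)

lemma Reachable.dist_map_le_s9 {G' : SimpleGraph W} (φ : G →g G') (h : G.Reachable u v) :
    G'.dist (φ u) (φ v) ≤ G.dist u v := by
  obtain ⟨p, hp⟩ := h.exists_walk_length_eq_dist
  calc G'.dist (φ u) (φ v) ≤ (p.map φ).length := dist_le _
    _ = G.dist u v := by rw [Walk.length_map, hp]

section NoJump

variable {H : SimpleGraph W} (g : W → ℝ)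
  (hinj : ∀ ⦃x y⦄, H.Reachable x y → g x = g y → x = y)
  (hgap : ∀ ⦃p q t⦄, H.Adj p q → H.Reachable p t → g t ∉ Set.Ioo (g p) (g q))
include hinj hgap

/- Without the edge `vw`, everything reachable from `v` stays at or below `g v`: the only edge
leaving that region is `vw` itself, since any other one would jump over `v` or over `w`. -/
lemma isBridge_of_forall_notMem_Ioo {v w : W} (hvw : H.Adj v w) (hlt : g v < g w) :
    H.IsBridge s(v, w) := by
  intro hreach
  suffices H.Reachable v w ∧ g w ≤ g v from (hlt.trans_le this.2).false
  refine hreach.induction_on_adj (P := fun z => H.Reachable v z ∧ g z ≤ g v) ⟨.refl _, le_rfl⟩ ?_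
  rintro a b hab' ⟨hva, hav⟩
  obtain ⟨hab, hne⟩ := deleteEdges_adj.mp hab'
  have hvb := hva.trans hab.reachable
  refine ⟨hvb, not_lt.mp fun hvb' => hne ?_⟩
  have hwb : g w ≤ g b := not_lt.mp fun hbw => hgap hvw hvb ⟨hvb', hbw⟩
  have hav : a = v := hinj hva.symm <| le_antisymm hav <|
    not_lt.mp fun hav' => hgap hab hva.symm ⟨hav', hvb'⟩
  subst hav
  have hbw : b = w := hinj (hvb.symm.trans hvw.reachable) <| le_antisymm
    (not_lt.mp fun hwb' => hgap hab hvw.reachable ⟨hlt, hwb'⟩) hwb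
  rw [hbw]
  exact Set.mem_singleton _

lemma isAcyclic_of_forall_notMem_Ioo : H.IsAcyclic := by
  refine isAcyclic_iff_forall_adj_isBridge.mpr fun v w hvw => ?_
  rcases lt_or_gt_of_ne fun h => hvw.ne (hinj hvw.reachable h) with hlt | hlt
  · exact isBridge_of_forall_notMem_Ioo g hinj hgap hvw hlt
  · rw [Sym2.eq_swap]
    exact isBridge_of_forall_notMem_Ioo g hinj hgap hvw.symm hlt

end NoJump

structure IsLineEmbedding (G : SimpleGraph V) (f : V → ℝ) (c : ℝ) : Prop where
  dist_le : ∀ x y, G.Reachable x y → (G.dist x y : ℝ) ≤ |f x - f y|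
  abs_sub_le : ∀ x y, G.Reachable x y → |f x - f y| ≤ c * G.dist x y

lemma IsLineEmbedding.eq_of_reachable {f : V → ℝ} {c : ℝ} (hf : G.IsLineEmbedding f c)
    {x y : V} (hxy : G.Reachable x y) (he : f x = f y) : x = y := by
  have h := hf.dist_le x y hxy
  rw [he, sub_self, abs_zero, Nat.cast_nonpos] at h
  exact hxy.dist_eq_zero_iff.mp h

structure IsVoronoiPartition (G : SimpleGraph V) (R : ℕ) (N : Set V) (center : V → V) :
    Prop where
  separated : ∀ u ∈ N, ∀ v ∈ N, u ≠ v → R < G.dist u v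
  center_mem : ∀ v, center v ∈ N
  center_eq_self : ∀ y ∈ N, center y = y
  dist_center_le : ∀ v, ∀ y ∈ N, G.dist v (center v) ≤ G.dist v y
  connected_cell : ∀ y ∈ N, (G.induce {v | center v = y}).Connected

namespace IsVoronoiPartition

variable {R : ℕ} {N : Set V} {center : V → V} (hP : G.IsVoronoiPartition R N center)
include hP

lemma lt_two_mul_dist {z t : V} (ht : t ∈ N) (hzt : center z ≠ t) (hreach : G.Reachable z t) :
    R < 2 * G.dist z t :=
  calc R < G.dist (center z) t := hP.separated _ (hP.center_mem z) t ht hzt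
    _ ≤ G.dist (center z) z + G.dist z t := hreach.dist_triangle_right _
    _ ≤ 2 * G.dist z t := by rw [dist_comm]; linarith [hP.dist_center_le z t ht]

lemma reachable_of_adj {S : Set V} {p q : S} (hp : (p : V) ∈ N) (hq : (q : V) ∈ N)
    (hpS : {v | center v = (p : V)} ⊆ S) (hqS : {v | center v = (q : V)} ⊆ S)
    (hpq : ∃ a b, G.Adj a b ∧ center a = p ∧ center b = q) : (G.induce S).Reachable p q := by
  obtain ⟨a, b, hab, ha, hb⟩ := hpq
  have hpa := ((hP.connected_cell p hp).preconnected ⟨p, hP.center_eq_self p hp⟩ ⟨a, ha⟩).map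
    (G.induceHomOfLE hpS).toHom
  have hbq := ((hP.connected_cell q hq).preconnected ⟨b, hb⟩ ⟨q, hP.center_eq_self q hq⟩).map
    (G.induceHomOfLE hqS).toHom
  exact hpa.trans ((show (G.induce S).Adj ⟨a, hpS ha⟩ ⟨b, hqS hb⟩ from hab).reachable.trans hbq)

variable {S : Set V} {f : S → ℝ} {c : ℝ} (hf : (G.induce S).IsLineEmbedding f c) (hcR : c ≤ R)
include hf hcR

lemma half_lt_abs_sub {z t : S} (ht : (t : V) ∈ N) (hzt : center z ≠ t)
    (hreach : (G.induce S).Reachable z t) : c / 2 < |f z - f t| := by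
  have hG : (G.dist z t : ℝ) ≤ (G.induce S).dist z t := by
    exact_mod_cast hreach.dist_map_le_s9 (Embedding.induce S).toHom
  have hR : (R : ℝ) < 2 * G.dist z t := by
    exact_mod_cast hP.lt_two_mul_dist ht hzt (hreach.map (Embedding.induce S).toHom)
  linarith [hf.dist_le z t hreach]

lemma lt_of_adj {x y t : S} (ht : (t : V) ∈ N) (hx : center x ≠ t) (hy : center y ≠ t)
    (hxy : (G.induce S).Adj x y) (hxt : (G.induce S).Reachable x t) (hlt : f x < f t) :
    f y < f t := by
  by_contra! hge
  have hstep : |f x - f y| ≤ c := by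
    simpa [dist_eq_one_iff_adj.mpr hxy] using hf.abs_sub_le x y hxy.reachable
  have hxt' := hP.half_lt_abs_sub hf hcR ht hx hxt
  have hyt' := hP.half_lt_abs_sub hf hcR ht hy (hxy.symm.reachable.trans hxt)
  rw [abs_of_neg (sub_neg.mpr hlt)] at hxt'
  rw [abs_of_nonneg (sub_nonneg.mpr hge)] at hyt'
  linarith [le_abs_self (f y - f x), abs_sub_comm (f x) (f y)]

lemma lt_of_mem_cell {p : V} (hp : p ∈ N) (hpS : {v | center v = p} ⊆ S) {t : S} (ht : (t : V) ∈ N)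
    (hpt : p ≠ t) (a b : {v | center v = p})
    (ha : (G.induce S).Reachable (Set.inclusion hpS a) t ∧ f (Set.inclusion hpS a) < f t) :
    (G.induce S).Reachable (Set.inclusion hpS b) t ∧ f (Set.inclusion hpS b) < f t := by
  refine ((hP.connected_cell p hp).preconnected a b).induction_on_adj
    (P := fun x => (G.induce S).Reachable (Set.inclusion hpS x) t ∧ f (Set.inclusion hpS x) < f t)
    ha ?_
  rintro x y hxy ⟨hxt, hlt⟩
  have hxy' : (G.induce S).Adj (Set.inclusion hpS x) (Set.inclusion hpS y) := hxy
  exact ⟨hxy'.symm.reachable.trans hxt,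
    hP.lt_of_adj hf hcR ht (x.2.trans_ne hpt) (y.2.trans_ne hpt) hxy' hxt hlt⟩

lemma notMem_Ioo_of_adj {p q t : S} (hp : (p : V) ∈ N) (hq : (q : V) ∈ N) (ht : (t : V) ∈ N)
    (hpS : {v | center v = (p : V)} ⊆ S) (hqS : {v | center v = (q : V)} ⊆ S)
    (hpq : ∃ a b, G.Adj a b ∧ center a = p ∧ center b = q)
    (hpt : (G.induce S).Reachable p t) : f t ∉ Set.Ioo (f p) (f q) := by
  rintro ⟨hlt, hgt⟩
  obtain ⟨a, b, hab, ha, hb⟩ := hpq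
  have htp : (p : V) ≠ t := fun h => hlt.ne (congrArg f (Subtype.ext h))
  have htq : (q : V) ≠ t := fun h => hgt.ne' (congrArg f (Subtype.ext h))
  have hab' : (G.induce S).Adj ⟨a, hpS ha⟩ ⟨b, hqS hb⟩ := hab
  have hat := hP.lt_of_mem_cell hf hcR hp hpS ht htp ⟨p, hP.center_eq_self p hp⟩ ⟨a, ha⟩ ⟨hpt, hlt⟩
  have hbt := hP.lt_of_adj hf hcR ht (ha.trans_ne htp) (hb.trans_ne htq) hab' hat.1 hat.2
  have hqt := hP.lt_of_mem_cell hf hcR hq hqS ht htq ⟨b, hb⟩ ⟨q, hP.center_eq_self q hq⟩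
    ⟨hab'.symm.reachable.trans hat.1, hbt⟩
  exact hgt.not_gt hqt.2

end IsVoronoiPartition

end SimpleGraph

open SimpleGraph

lemma ncard_setOf_exists_apply_eq_le {V : Type*} [Finite V] {N : Set V} (center : V → V)
    (Y : Set V) : {w : N | ∃ v ∈ Y, center v = (w : V)}.ncard ≤ Y.ncard := by
  rw [← Set.ncard_image_of_injective _ Subtype.val_injective]
  calc _ ≤ (center '' Y).ncard := Set.ncard_le_ncard <| by
        rintro _ ⟨w, ⟨v, hv, hvw⟩, rfl⟩
        exact ⟨v, hv, hvw⟩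
    _ ≤ Y.ncard := Set.ncard_image_le

theorem minor_has_small_feedback_vertex_set_general {V : Type*} [Fintype V]
    (G : SimpleGraph V) (c : ℝ)
    (k : ℕ) (Y : Set V) (hYcard : Y.ncard ≤ k)
    (f : {v : V // v ∉ Y} → ℝ)
    (hnc : ∀ x y : {v : V // v ∉ Y},
      (G.induce {v : V | v ∉ Y}).Reachable x y →
        ((G.induce {v : V | v ∉ Y}).dist x y : ℝ) ≤ |f x - f y|)
    (hexp : ∀ x y : {v : V // v ∉ Y},
      (G.induce {v : V | v ∉ Y}).Reachable x y →
        |f x - f y| ≤ c * (G.induce {v : V | v ∉ Y}).dist x y)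
    (R : ℕ) (hcR : c ≤ R)
    (N : Set V) (center : V → V)
    (hsep : ∀ u ∈ N, ∀ v ∈ N, u ≠ v → R < G.dist u v)
    (hcen : ∀ v : V, center v ∈ N)
    (hfix : ∀ y ∈ N, center y = y)
    (hnear : ∀ v : V, ∀ y ∈ N, G.dist v (center v) ≤ G.dist v y)
    (hconn : ∀ y ∈ N, (G.induce {v : V | center v = y}).Connected) :
    ∃ X : Set N, X.ncard ≤ k ∧
      X = {w : N | ∃ v ∈ Y, center v = (w : V)} ∧
      ((voronoiMinor G N center).induce {w : N | w ∉ X}).IsAcyclic := by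
  refine ⟨_, (ncard_setOf_exists_apply_eq_le center Y).trans hYcard, rfl, ?_⟩
  have hP : G.IsVoronoiPartition R N center := ⟨hsep, hcen, hfix, hnear, hconn⟩
  have hf : (G.induce {v | v ∉ Y}).IsLineEmbedding f c := ⟨hnc, hexp⟩
  set X : Set N := {w : N | ∃ v ∈ Y, center v = (w : V)}
  have hcell (w : {w : N // w ∉ X}) : {v | center v = (w : V)} ⊆ {v | v ∉ Y} :=
    fun z hz hzY => w.2 ⟨z, hzY, hz⟩
  let φ (w : {w : N // w ∉ X}) : {v : V // v ∉ Y} := ⟨w, hcell w (hfix _ w.1.2)⟩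
  have hreach {x y} (hxy : ((voronoiMinor G N center).induce {w | w ∉ X}).Reachable x y) :
      (G.induce {v | v ∉ Y}).Reachable (φ x) (φ y) :=
    hxy.map_of_forall_adj φ fun p q (hpq : (voronoiMinor G N center).Adj p q) =>
      hP.reachable_of_adj p.1.2 q.1.2 (hcell p) (hcell q) hpq.2
  refine isAcyclic_of_forall_notMem_Ioo (f ∘ φ) (fun x y hxy he => ?_) fun p q t hpq hpt => ?_
  · have hφ : φ x = φ y := hf.eq_of_reachable (hreach hxy) he
    exact Subtype.ext (Subtype.ext (congrArg (fun z : {v : V // v ∉ Y} => (z : V)) hφ))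
  · exact hP.notMem_Ioo_of_adj hf hcR p.1.2 q.1.2 t.1.2 (hcell p) (hcell q) hpq.2 (hreach hpt)

/-- Suppose a connected graph `G` admits a `(k,c)`-embedding into
the line, witnessed by an outlier set `Y` (`|Y| ≤ k`) and a non-contracting
embedding of `G \ Y` with expansion at most `c`. Let `H` be an `R`-minor of `G`
with `R ≥ c`. Then the set `X` of net points whose Voronoi clusters intersect `Y`
is a feedback vertex set of `H` with `|X| ≤ k`; in particular a feedback vertex
set of size at most `k` exists. -/
theorem minor_has_small_feedback_vertex_set {V : Type*} [Fintype V]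
    (G : SimpleGraph V) (hG : G.Connected) (c : ℝ) (hc : 1 ≤ c)
    (k : ℕ) (Y : Set V) (hYcard : Y.ncard ≤ k)
    (f : {v : V // v ∉ Y} → ℝ)
    (hnc : ∀ x y : {v : V // v ∉ Y},
      (G.induce {v : V | v ∉ Y}).Reachable x y →
        ((G.induce {v : V | v ∉ Y}).dist x y : ℝ) ≤ |f x - f y|)
    (hexp : ∀ x y : {v : V // v ∉ Y},
      (G.induce {v : V | v ∉ Y}).Reachable x y →
        |f x - f y| ≤ c * (G.induce {v : V | v ∉ Y}).dist x y)
    (R : ℕ) (hcR : c ≤ R)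
    (N : Set V) (center : V → V)
    (hsep : ∀ u ∈ N, ∀ v ∈ N, u ≠ v → R < G.dist u v)
    (hcov : ∀ v : V, ∃ y ∈ N, G.dist v y ≤ R)
    (hcen : ∀ v : V, center v ∈ N)
    (hfix : ∀ y ∈ N, center y = y)
    (hnear : ∀ v : V, ∀ y ∈ N, G.dist v (center v) ≤ G.dist v y)
    (hrad : ∀ v : V, G.dist v (center v) ≤ R)
    (hconn : ∀ y ∈ N, (G.induce {v : V | center v = y}).Connected) :
    ∃ X : Set N, X.ncard ≤ k ∧
      X = {w : N | ∃ v ∈ Y, center v = (w : V)} ∧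
      ((voronoiMinor G N center).induce {w : N | w ∉ X}).IsAcyclic :=
  minor_has_small_feedback_vertex_set_general G c k Y hYcard f hnc hexp R hcR N center hsep hcen
    hfix hnear hconn
end

section
/- Let F be a forest that admits a (k,c)-embedding into the line. Then there exists a set X ⊆ V(F) with |X| ≤ k such that F \ X contains no (c/2 + 1)-tripod as a subgraph. -/
/-- `G` contains an `R`-tripod as a subgraph: three paths `P₁, P₂, P₃` sharing a
common root `v`, whose other endpoints `v₁, v₂, v₃` are each at distance at least
`R` (in `G`) from every vertex of the other two paths. -/
def ContainsTripod {W : Type*} (G : SimpleGraph W) (R : ℝ) : Prop :=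
  ∃ (v v₁ v₂ v₃ : W) (p₁ : G.Walk v v₁) (p₂ : G.Walk v v₂) (p₃ : G.Walk v v₃),
    p₁.IsPath ∧ p₂.IsPath ∧ p₃.IsPath ∧
    (∀ u ∈ p₂.support, R ≤ (G.dist v₁ u : ℝ)) ∧
    (∀ u ∈ p₃.support, R ≤ (G.dist v₁ u : ℝ)) ∧
    (∀ u ∈ p₁.support, R ≤ (G.dist v₂ u : ℝ)) ∧
    (∀ u ∈ p₃.support, R ≤ (G.dist v₂ u : ℝ)) ∧
    (∀ u ∈ p₁.support, R ≤ (G.dist v₃ u : ℝ)) ∧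
    (∀ u ∈ p₂.support, R ≤ (G.dist v₃ u : ℝ))


lemma walk_ivt {W : Type*} {G : SimpleGraph W} (f : W → ℝ) (c t : ℝ) (hc : 0 ≤ c)
    (hstep : ∀ x y : W, G.Adj x y → |f x - f y| ≤ c) :
    ∀ {a b : W} (p : G.Walk a b), min (f a) (f b) ≤ t → t ≤ max (f a) (f b) →
      ∃ u ∈ p.support, |f u - t| ≤ c / 2 := by
  intro a b p
  induction p with
  | @nil x =>
    intro h1 h2
    simp only [min_self, max_self] at h1 h2
    refine ⟨x, by simp, ?_⟩
    have : f x = t := le_antisymm h1 h2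
    simp [this]
    linarith
  | @cons a w b h q ih =>
    intro h1 h2
    by_cases hw : min (f w) (f b) ≤ t ∧ t ≤ max (f w) (f b)
    · obtain ⟨u, hu, hle⟩ := ih hw.1 hw.2
      exact ⟨u, by simp [hu], hle⟩
    · have hac := hstep _ _ h
      obtain ⟨hA, hB⟩ := abs_le.mp hac
      have hbet : min (f a) (f w) ≤ t ∧ t ≤ max (f a) (f w) := by
        simp only [min_le_iff, le_max_iff, not_and_or, not_or, not_le] at h1 h2 hw ⊢
        rcases hw with ⟨hw1, hw2⟩ | ⟨hw1, hw2⟩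
        · exact ⟨Or.inl (h1.resolve_right (by linarith)), Or.inr hw1.le⟩
        · exact ⟨Or.inr hw1.le, Or.inl (h2.resolve_right (by linarith))⟩
      obtain ⟨hb1, hb2⟩ := hbet
      by_cases ha : |f a - t| ≤ c / 2
      · exact ⟨a, by simp, ha⟩
      · refine ⟨w, by simp, ?_⟩
        push_neg at ha
        rcases le_total (f a) (f w) with hle | hle
        · have h1' : f a ≤ t := by rwa [min_eq_left hle] at hb1
          have h2' : t ≤ f w := by rwa [max_eq_right hle] at hb2
          rw [abs_of_nonpos (by linarith : f a - t ≤ 0)] at ha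
          rw [abs_of_nonneg (by linarith : (0:ℝ) ≤ f w - t)]
          linarith
        · have h1' : f w ≤ t := by rwa [min_eq_right hle] at hb1
          have h2' : t ≤ f a := by rwa [max_eq_left hle] at hb2
          rw [abs_of_nonneg (by linarith : (0:ℝ) ≤ f a - t)] at ha
          rw [abs_of_nonpos (by linarith : f w - t ≤ 0)]
          linarith

lemma median_real (x y z : ℝ) :
    (min y z ≤ x ∧ x ≤ max y z) ∨ (min x z ≤ y ∧ y ≤ max x z) ∨
      (min x y ≤ z ∧ z ≤ max x y) := by
  simp only [min_le_iff, le_max_iff]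
  rcases le_total x y with h1 | h1 <;> rcases le_total y z with h2 | h2 <;>
    rcases le_total x z with h3 | h3 <;> tauto

/-- Let `F` be a forest admitting a `(k,c)`-embedding into the
line. Then there is `X ⊆ V(F)` with `|X| ≤ k` such that `F \ X` contains no
`(c/2 + 1)`-tripod as a subgraph. -/
theorem forest_outlier_embedding_tripod_free {V : Type*} [Fintype V]
    (F : SimpleGraph V) (hF : F.IsAcyclic) (k : ℕ) (c : ℝ) (hc : 1 ≤ c)
    (hemb : ∃ (K : Set V), K.ncard ≤ k ∧ ∃ f : {v : V // v ∉ K} → ℝ,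
      ∀ x y : {v : V // v ∉ K},
        (F.induce {v : V | v ∉ K}).Reachable x y →
          ((F.induce {v : V | v ∉ K}).dist x y : ℝ) ≤ |f x - f y| ∧
          |f x - f y| ≤ c * (F.induce {v : V | v ∉ K}).dist x y) :
    ∃ X : Set V, X.ncard ≤ k ∧
      ¬ ContainsTripod (F.induce {v : V | v ∉ X}) (c / 2 + 1) := by
  classical
  obtain ⟨K, hK, f, hf⟩ := hemb
  refine ⟨K, hK, ?_⟩
  set G := F.induce {v : V | v ∉ K} with hG
  rintro ⟨v, v₁, v₂, v₃, p₁, p₂, p₃, hp1, hp2, hp3, d12, d13, d21, d23, d31, d32⟩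
  have hc0 : (0:ℝ) ≤ c := le_trans zero_le_one hc
  have hstep : ∀ x y, G.Adj x y → |f x - f y| ≤ c := by
    intro x y hxy
    have hr : G.Reachable x y := hxy.reachable
    have hd : G.dist x y ≤ 1 := by
      simpa using SimpleGraph.dist_le hxy.toWalk
    calc |f x - f y| ≤ c * G.dist x y := (hf x y hr).2
      _ ≤ c * 1 := by
          apply mul_le_mul_of_nonneg_left _ hc0
          exact_mod_cast hd
      _ = c := mul_one c
  have main : ∀ (w a b : {v : V // v ∉ K}) (pw : G.Walk v w) (pa : G.Walk v a)
      (pb : G.Walk v b),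
      (∀ u ∈ pa.support, (c / 2 + 1 : ℝ) ≤ G.dist w u) →
      (∀ u ∈ pb.support, (c / 2 + 1 : ℝ) ≤ G.dist w u) →
      min (f a) (f b) ≤ f w → f w ≤ max (f a) (f b) → False := by
    intro w a b pw pa pb hda hdb hmin hmax
    obtain ⟨u, hu, hle⟩ := walk_ivt f c (f w) hc0 hstep (pa.reverse.append pb) hmin hmax
    rw [SimpleGraph.Walk.mem_support_append_iff] at hu
    have hu' : u ∈ pa.support ∨ u ∈ pb.support := by
      rcases hu with hu | hu
      · left; rwa [SimpleGraph.Walk.support_reverse, List.mem_reverse] at hu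
      · right; exact hu
    have hreach : G.Reachable w u := by
      refine SimpleGraph.Reachable.trans ⟨pw.reverse⟩ ?_
      rcases hu' with hu' | hu'
      · exact ⟨pa.takeUntil u hu'⟩
      · exact ⟨pb.takeUntil u hu'⟩
    have hdist : (c / 2 + 1 : ℝ) ≤ G.dist w u := by
      rcases hu' with hu' | hu'
      · exact hda u hu'
      · exact hdb u hu'
    have := (hf w u hreach).1
    rw [abs_sub_comm] at this
    linarith
  rcases median_real (f v₁) (f v₂) (f v₃) with h | h | h
  · exact main v₁ v₂ v₃ p₁ p₂ p₃ d12 d13 h.1 h.2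
  · exact main v₂ v₁ v₃ p₂ p₁ p₃ d21 d23 h.1 h.2
  · exact main v₃ v₁ v₂ p₃ p₁ p₂ d31 d32 h.1 h.2
end

section
/- Let G be a graph, k ≥ 0, c ≥ 1, and suppose G admits a (k,c)-embedding into the line. Then for any U ⊂ V(G), the graph G \ U admits a ((2c+1)|U| + k, 4c³ + c)-embedding into the line. -/
open SimpleGraph


section AuxReal
lemma seg_union {a b b' t : ℝ} (h1 : min a b' ≤ t) (h2 : t ≤ max a b') :
    (min a b ≤ t ∧ t ≤ max a b) ∨ (min b b' ≤ t ∧ t ≤ max b b') := by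
  rcases le_total a t with ha | ha
  · rcases le_total t b with hb | hb
    · exact Or.inl ⟨(min_le_left a b).trans ha, hb.trans (le_max_right a b)⟩
    · rcases le_max_iff.mp h2 with h | h
      · exact Or.inl ⟨(min_le_right a b).trans hb, h.trans (le_max_left a b)⟩
      · exact Or.inr ⟨(min_le_left b b').trans hb, h.trans (le_max_right b b')⟩
  · rcases min_le_iff.mp h1 with h | h
    · exact Or.inl ⟨(min_le_left a b).trans h, ha.trans (le_max_left a b)⟩
    · rcases le_total t b with hb | hb
      · exact Or.inr ⟨(min_le_right b b').trans h, hb.trans (le_max_left b b')⟩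
      · exact Or.inl ⟨(min_le_right a b).trans hb, ha.trans (le_max_left a b)⟩

lemma sep_card (s : Finset ℝ)
    (hsep : ∀ a ∈ s, ∀ b ∈ s, a ≠ b → 1 ≤ |a - b|) (hs : s.Nonempty) :
    (s.card : ℝ) ≤ s.max' hs - s.min' hs + 1 := by
  classical
  induction s using Finset.strongInduction with
  | _ s ih =>

    by_cases h1 : s.card ≤ 1
    · have hc : (s.card : ℝ) ≤ 1 := by exact_mod_cast h1
      have hmm : s.min' hs ≤ s.max' hs := s.min'_le _ (s.max'_mem hs)
      linarith
    · set t := s.erase (s.min' hs) with ht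
      have hts : t ⊂ s := Finset.erase_ssubset (s.min'_mem hs)
      have hce : t.card = s.card - 1 := Finset.card_erase_of_mem (s.min'_mem hs)
      have htne : t.Nonempty := by rw [← Finset.card_pos]; omega
      have hsep' : ∀ a ∈ t, ∀ b ∈ t, a ≠ b → 1 ≤ |a - b| := fun a hat b hbt hab =>
        hsep a (Finset.mem_of_mem_erase hat) b (Finset.mem_of_mem_erase hbt) hab
      have hrec := ih t hts hsep' htne
      have hcard : (s.card : ℝ) = (t.card : ℝ) + 1 := by
        rw [hce]; push_cast [Nat.cast_sub (by omega : 1 ≤ s.card)]; ring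
      -- min' t ≥ min' s + 1
      have hmt : s.min' hs + 1 ≤ t.min' htne := by
        have hmem : t.min' htne ∈ t := t.min'_mem htne
        have hmem' : t.min' htne ∈ s := Finset.mem_of_mem_erase hmem
        have hne : t.min' htne ≠ s.min' hs := Finset.ne_of_mem_erase hmem
        have h1' := hsep _ hmem' _ (s.min'_mem hs) hne
        have h2' : s.min' hs ≤ t.min' htne := s.min'_le _ hmem'
        rw [abs_of_nonneg (by linarith)] at h1'
        linarith
      have hMt : t.max' htne ≤ s.max' hs :=
        s.le_max' _ (Finset.mem_of_mem_erase (t.max'_mem htne))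
      linarith
end AuxReal


section AuxWalk
variable {W : Type*} {Γ : SimpleGraph W}

/-- there is a walk between getVerts of exactly the index difference length -/
lemma exists_walk_getVert (p : Γ.Walk u v) {i j : ℕ} (hij : i ≤ j) (hj : j ≤ p.length) :
    ∃ q : Γ.Walk (p.getVert i) (p.getVert j), q.length = j - i := by
  induction j, hij using Nat.le_induction with
  | base => exact ⟨Walk.nil, by simp⟩
  | succ n hin ih =>
    obtain ⟨q, hq⟩ := ih (by omega)
    exact ⟨q.concat (p.adj_getVert_succ (by omega)), by rw [Walk.length_concat, hq]; omega⟩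

lemma reachable_getVert (p : Γ.Walk u v) {i j : ℕ} (hij : i ≤ j) (hj : j ≤ p.length) :
    Γ.Reachable (p.getVert i) (p.getVert j) := by
  obtain ⟨q, _⟩ := exists_walk_getVert p hij hj
  exact ⟨q⟩

lemma dist_getVert_le (p : Γ.Walk u v) {i j : ℕ} (hij : i ≤ j) (hj : j ≤ p.length) :
    Γ.dist (p.getVert i) (p.getVert j) ≤ j - i := by
  obtain ⟨q, hq⟩ := exists_walk_getVert p hij hj
  exact hq ▸ Γ.dist_le q

/-- subpath of a shortest walk is shortest -/
lemma dist_getVert_shortest (p : Γ.Walk u v) (hp : p.length = Γ.dist u v)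
    {i j : ℕ} (hij : i ≤ j) (hj : j ≤ p.length) :
    Γ.dist (p.getVert i) (p.getVert j) = j - i := by
  refine le_antisymm (dist_getVert_le p hij hj) ?_
  obtain ⟨A, hA⟩ := exists_walk_getVert p (Nat.zero_le i) (le_trans hij hj)
  obtain ⟨C, hC⟩ := exists_walk_getVert p hj (le_refl p.length)
  obtain ⟨B, hB⟩ := (reachable_getVert p hij hj).exists_walk_length_eq_dist
  have hle := Γ.dist_le (((A.copy p.getVert_zero rfl).append B).append (C.copy rfl p.getVert_length))
  rw [Walk.length_append, Walk.length_append, Walk.length_copy, Walk.length_copy] at hle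
  rw [← hp] at hle
  omega

lemma getVert_ne (p : Γ.Walk u v) (hp : p.length = Γ.dist u v)
    {i j : ℕ} (hij : i < j) (hj : j ≤ p.length) :
    p.getVert i ≠ p.getVert j := by
  intro h
  have := dist_getVert_shortest p hp (le_of_lt hij) hj
  rw [h, SimpleGraph.dist_self] at this
  omega

lemma dist_le_of_mem_support (p : Γ.Walk u v) {w : W} (hw : w ∈ p.support) :
    Γ.Reachable u w ∧ Γ.dist u w ≤ p.length := by
  classical
  exact ⟨⟨p.takeUntil w hw⟩, le_trans (Γ.dist_le _) (p.length_takeUntil_le hw)⟩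

variable {V : Type*} {G : SimpleGraph V}

/-- inclusion hom between induced subgraphs -/
def inclHom (G : SimpleGraph V) {A B : Set V} (hAB : A ⊆ B) : G.induce A →g G.induce B :=
  ⟨fun v => ⟨v.1, hAB v.2⟩, fun h => by simpa using h⟩

lemma inclHom_apply (G : SimpleGraph V) {A B : Set V} (hAB : A ⊆ B) (v : ↥A) :
    (inclHom G hAB v : ↥B) = ⟨v.1, hAB v.2⟩ := rfl

lemma reachable_incl {A B : Set V} (hAB : A ⊆ B) {a b : ↥A}
    (h : (G.induce A).Reachable a b) :
    (G.induce B).Reachable ⟨a.1, hAB a.2⟩ ⟨b.1, hAB b.2⟩ := by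
  obtain ⟨p⟩ := h
  exact ⟨p.map (inclHom G hAB)⟩

lemma dist_incl_le {A B : Set V} (hAB : A ⊆ B) {a b : ↥A}
    (h : (G.induce A).Reachable a b) :
    (G.induce B).dist ⟨a.1, hAB a.2⟩ ⟨b.1, hAB b.2⟩ ≤ (G.induce A).dist a b := by
  obtain ⟨p, hp⟩ := h.exists_walk_length_eq_dist
  calc (G.induce B).dist _ _ ≤ (p.map (inclHom G hAB)).length := (G.induce B).dist_le _
  _ = p.length := Walk.length_map _ _
  _ = _ := hp

/-- transfer a walk in `G.induce B` whose support lies in `A` to `G.induce A` -/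
lemma walk_transfer {A B : Set V} {a b : ↥B} (p : (G.induce B).Walk a b)
    (hsup : ∀ v, v ∈ p.support → v.1 ∈ A) (ha : a.1 ∈ A) (hb : b.1 ∈ A) :
    ∃ q : (G.induce A).Walk ⟨a.1, ha⟩ ⟨b.1, hb⟩, q.length = p.length := by
  induction p with
  | nil => exact ⟨Walk.nil, rfl⟩
  | @cons x y z h p ih =>
    have hy : y.1 ∈ A := hsup y (by simp)
    obtain ⟨q, hq⟩ := ih (fun v hv => hsup v (by simp [hv])) hy hb
    have hadj : (G.induce A).Adj ⟨x.1, ha⟩ ⟨y.1, hy⟩ := by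
      simpa using (by simpa using h : G.Adj x.1 y.1)
    exact ⟨Walk.cons hadj q, by simp [hq]⟩
end AuxWalk


section AuxCore
variable {V : Type*}

lemma core_top (G : SimpleGraph V) (A B : Set V) (hAB : A ⊆ B) (U : Set V)
    (c : ℝ) (hc : 1 ≤ c) (φ : ↥B → ℝ)
    (hP1 : ∀ x y : ↥B, (G.induce B).Reachable x y →
      ((G.induce B).dist x y : ℝ) ≤ |φ x - φ y| ∧ |φ x - φ y| ≤ c * (G.induce B).dist x y)
    (hmem : ∀ v : ↥B, (v.1 ∈ A ↔ ∀ u : ↥B, u.1 ∈ U → c < |φ v - φ u|))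
    {x y : ↥A} (q : (G.induce A).Walk x y) (hq : q.length = (G.induce A).dist x y)
    (ψ : ℕ → ℝ) (hψ : ∀ i, ψ i = φ ⟨(q.getVert i).1, hAB (q.getVert i).2⟩)
    (M m : ℝ)
    (hM : ∀ i, i ≤ q.length → ψ i ≤ M) (hm : ∀ i, i ≤ q.length → m ≤ ψ i)
    (htM : ∃ t, t ≤ q.length ∧ ψ t = M) (htm : ∃ t, t ≤ q.length ∧ ψ t = m)
    (hgap : 2*c^2 + c ≤ M - m) :
    M ≤ max (ψ 0) (ψ q.length) + c^2 + c := by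
  classical
  have hc0 : (0:ℝ) < c := by linarith
  -- step bounds
  have step : ∀ i, i < q.length → 1 ≤ |ψ (i+1) - ψ i| ∧ |ψ (i+1) - ψ i| ≤ c := by
    intro i hi
    have hadjA := q.adj_getVert_succ hi
    have hadjB : (G.induce B).Adj ⟨(q.getVert i).1, hAB (q.getVert i).2⟩
        ⟨(q.getVert (i+1)).1, hAB (q.getVert (i+1)).2⟩ := by
      simpa using (by simpa using hadjA : G.Adj (q.getVert i).1 (q.getVert (i+1)).1)
    have hd1 : (G.induce B).dist ⟨(q.getVert i).1, hAB (q.getVert i).2⟩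
        ⟨(q.getVert (i+1)).1, hAB (q.getVert (i+1)).2⟩ = 1 :=
      SimpleGraph.dist_eq_one_iff_adj.mpr hadjB
    have := hP1 _ _ hadjB.reachable
    rw [hd1] at this
    rw [hψ i, hψ (i+1), abs_sub_comm]
    push_cast at this
    simpa using this
  -- climbing bound
  have climb : ∀ i j, i ≤ j → j ≤ q.length → |ψ j - ψ i| ≤ c * ((j - i : ℕ) : ℝ) := by
    intro i j hij hj
    induction j, hij using Nat.le_induction with
    | base => simp
    | succ n hin ih =>
      have hn : n ≤ q.length := by omega
      have h1 := ih hn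
      have h2 := (step n (by omega)).2
      have : |ψ (n+1) - ψ i| ≤ |ψ (n+1) - ψ n| + |ψ n - ψ i| := abs_sub_le _ _ _
      have hcast : ((n + 1 - i : ℕ) : ℝ) = ((n - i : ℕ) : ℝ) + 1 := by
        push_cast [Nat.cast_sub hin, Nat.cast_sub (by omega : i ≤ n + 1)]; ring
      rw [hcast]
      linarith
  -- the whole segment from ψ 0 to ψ i is D-free
  have hseg : ∀ i, i ≤ q.length → ∀ t, min (ψ 0) (ψ i) ≤ t → t ≤ max (ψ 0) (ψ i) →
      ∀ u : ↥B, u.1 ∈ U → c < |t - φ u| := by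
    intro i
    induction i with
    | zero =>
      intro _ t h1 h2 u hu
      have ht : t = ψ 0 := le_antisymm (by simpa using h2) (by simpa using h1)
      have := (hmem ⟨(q.getVert 0).1, hAB (q.getVert 0).2⟩).mp (q.getVert 0).2 u hu
      rw [← hψ 0] at this
      rwa [ht]
    | succ i ih =>
      intro hi1 t h1 h2 u hu
      rcases seg_union (b := ψ i) h1 h2 with ⟨h1', h2'⟩ | ⟨h1', h2'⟩
      · exact ih (by omega) t h1' h2' u hu
      · by_contra hcon
        have habs := abs_le.mp (not_lt.mp hcon)
        have hsi : c < |ψ i - φ u| := by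
          have := (hmem ⟨(q.getVert i).1, hAB (q.getVert i).2⟩).mp (q.getVert i).2 u hu
          rwa [← hψ i] at this
        have hsj : c < |ψ (i+1) - φ u| := by
          have := (hmem ⟨(q.getVert (i+1)).1, hAB (q.getVert (i+1)).2⟩).mp (q.getVert (i+1)).2 u hu
          rwa [← hψ (i+1)] at this
        have hst := abs_le.mp (step i (by omega)).2
        rcases lt_abs.mp hsi with h3 | h3 <;> rcases lt_abs.mp hsj with h4 | h4 <;>
          rcases min_le_iff.mp h1' with h5 | h5 <;> rcases le_max_iff.mp h2' with h6 | h6 <;>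
          linarith
  -- the whole interval [m, M] is D-free
  obtain ⟨tM, htMle, htMeq⟩ := htM
  obtain ⟨tm, htmle, htmeq⟩ := htm
  have hDfree : ∀ t, m ≤ t → t ≤ M → ∀ u : ↥B, u.1 ∈ U → c < |t - φ u| := by
    intro t h1 h2 u hu
    rcases le_total t (ψ 0) with h | h
    · refine hseg tm htmle t ?_ ?_ u hu
      · rw [htmeq]; exact (min_le_right _ _).trans h1
      · exact h.trans (le_max_left _ _)
    · refine hseg tM htMle t ?_ ?_ u hu
      · exact (min_le_left _ _).trans h
      · rw [htMeq]; exact h2.trans (le_max_right _ _)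
  -- main contradiction argument
  by_contra hcon
  set w : ℝ := M - c^2 - c with hw
  have hψ0w : ψ 0 < w := by
    have := le_max_left (ψ 0) (ψ q.length); push_neg at hcon; linarith
  have hψLw : ψ q.length < w := by
    have := le_max_right (ψ 0) (ψ q.length); push_neg at hcon; linarith
  have hwM : w < M := by nlinarith
  have htM0 : tM ≠ 0 := by intro h; rw [h] at htMeq; linarith
  have htML : tM ≠ q.length := by intro h; rw [h] at htMeq; linarith
  have htMltL : tM < q.length := lt_of_le_of_ne htMle htML
  -- a : last index < tM with ψ < w
  set P : ℕ → Prop := fun i => ψ i < w with hP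
  have haP : P (Nat.findGreatest P tM) := Nat.findGreatest_spec (Nat.zero_le tM) hψ0w
  set a := Nat.findGreatest P tM with ha
  have ha_le : a ≤ tM := Nat.findGreatest_le tM
  have ha_lt : a < tM := lt_of_le_of_ne ha_le (by intro h; rw [h] at haP; exact absurd haP (by simp [hP]; linarith))
  have hbetween_a : ∀ i, a < i → i ≤ tM → w ≤ ψ i := by
    intro i h1 h2
    exact le_of_not_gt (Nat.findGreatest_is_greatest h1 h2)
  -- b : first index > tM with ψ < w
  have hexb : ∃ j, (tM < j ∧ j ≤ q.length) ∧ ψ j < w := ⟨q.length, ⟨htMltL, le_refl _⟩, hψLw⟩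
  set b := Nat.find hexb with hb
  obtain ⟨⟨hbtM, hbL⟩, hbw⟩ := Nat.find_spec hexb
  have hbetween_b : ∀ i, tM ≤ i → i < b → w ≤ ψ i := by
    intro i h1 h2
    rcases eq_or_lt_of_le h1 with h | h
    · rw [← h, htMeq]; linarith
    · have := Nat.find_min hexb h2
      push_neg at this
      exact this ⟨h, by omega⟩
  set α := a + 1 with hα
  set β := b - 1 with hβ
  have hαtM : α ≤ tM := ha_lt
  have hβtM : tM ≤ β := by omega
  have hβL : β ≤ q.length := by omega
  have hβb : β + 1 = b := by omega
  have hψα_lo : w ≤ ψ α := hbetween_a α (by omega) hαtM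
  have hψα_hi : ψ α < w + c := by
    have := abs_le.mp (step a (by omega)).2
    have : ψ α ≤ ψ a + c := by rw [hα]; linarith [this.2]
    linarith [haP]
  have hψβ_lo : w ≤ ψ β := hbetween_b β hβtM (by omega)
  have hψβ_hi : ψ β < w + c := by
    have h := abs_le.mp (step β (by omega)).2
    rw [hβb] at h
    linarith [h.1]
  -- the climb from α to tM takes more than c steps
  have hclimb := climb α tM hαtM htMle
  have hMψα : c * c < M - ψ α := by rw [htMeq] at hclimb; nlinarith [abs_le.mp hclimb]
  have hsq : c^2 = c * c := sq c
  have htc : c < ((tM - α : ℕ) : ℝ) := by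
    rw [htMeq] at hclimb
    have h1 : M - ψ α ≤ c * ((tM - α : ℕ) : ℝ) := le_trans (le_abs_self _) hclimb
    nlinarith
  have hcast_le : ((tM - α : ℕ) : ℝ) ≤ ((β - α : ℕ) : ℝ) := by
    have : tM - α ≤ β - α := by omega
    exact_mod_cast this
  have hdeq := dist_getVert_shortest q hq (le_trans hαtM hβtM) hβL
  have hreachA : (G.induce A).Reachable (q.getVert α) (q.getVert β) :=
    reachable_getVert q (le_trans hαtM hβtM) hβL
  have hreachB := reachable_incl hAB hreachA
  have hαβabs : |ψ α - ψ β| ≤ c := abs_le.mpr ⟨by linarith, by linarith⟩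
  have hdB := (hP1 _ _ hreachB).1
  rw [← hψ α, ← hψ β] at hdB
  have hdBc : (((G.induce B).dist ⟨(q.getVert α).1, hAB (q.getVert α).2⟩
      ⟨(q.getVert β).1, hAB (q.getVert β).2⟩ : ℕ) : ℝ) ≤ c := le_trans hdB hαβabs
  obtain ⟨R, hR⟩ := hreachB.exists_walk_length_eq_dist
  have hRlen : (R.length : ℝ) ≤ c := by rw [hR]; exact hdBc
  have hsupR : ∀ v, v ∈ R.support → v.1 ∈ A := by
    intro v hv
    obtain ⟨hrv, hdv⟩ := dist_le_of_mem_support R hv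
    have hdvc : (((G.induce B).dist ⟨(q.getVert α).1, hAB (q.getVert α).2⟩ v : ℕ) : ℝ) ≤ c := by
      calc (((G.induce B).dist ⟨(q.getVert α).1, hAB (q.getVert α).2⟩ v : ℕ) : ℝ)
          ≤ (R.length : ℝ) := by exact_mod_cast hdv
        _ ≤ c := hRlen
    have hupper := (hP1 _ _ hrv).2
    have h5 : |φ ⟨(q.getVert α).1, hAB (q.getVert α).2⟩ - φ v| ≤ c * c := by
      refine le_trans hupper ?_
      exact mul_le_mul_of_nonneg_left hdvc (le_of_lt hc0)
    rw [← hψ α] at h5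
    have habs5 := abs_le.mp h5
    refine (hmem v).mpr ?_
    intro u hu
    refine hDfree (φ v) ?_ ?_ u hu
    · linarith [habs5.2]
    · linarith [habs5.1]
  obtain ⟨q', hq'⟩ := walk_transfer R hsupR (q.getVert α).2 (q.getVert β).2
  have hdA : (G.induce A).dist (q.getVert α) (q.getVert β) ≤ q'.length :=
    (G.induce A).dist_le q'
  have hfin : ((β - α : ℕ) : ℝ) ≤ c := by
    rw [← hdeq]
    calc (((G.induce A).dist (q.getVert α) (q.getVert β) : ℕ) : ℝ)
        ≤ (q'.length : ℝ) := by exact_mod_cast hdA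
      _ = (R.length : ℝ) := by exact_mod_cast hq'
      _ ≤ c := hRlen
  linarith
end AuxCore


section AuxMain
variable {V : Type*}

lemma main_bound (G : SimpleGraph V) (A B : Set V) (hAB : A ⊆ B) (U : Set V)
    (c : ℝ) (hc : 1 ≤ c) (φ : ↥B → ℝ)
    (hP1 : ∀ x y : ↥B, (G.induce B).Reachable x y →
      ((G.induce B).dist x y : ℝ) ≤ |φ x - φ y| ∧ |φ x - φ y| ≤ c * (G.induce B).dist x y)
    (hP3 : ∀ v w : ↥B, v ≠ w → 1 ≤ |φ v - φ w|)
    (hmem : ∀ v : ↥B, (v.1 ∈ A ↔ ∀ u : ↥B, u.1 ∈ U → c < |φ v - φ u|))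
    (x y : ↥A) (hr : (G.induce A).Reachable x y) :
    ((G.induce A).dist x y : ℝ) ≤
      (4*c^2+1) * ((G.induce B).dist ⟨x.1, hAB x.2⟩ ⟨y.1, hAB y.2⟩ : ℕ) := by
  classical
  have hc0 : (0:ℝ) < c := by linarith
  by_cases hxy : x = y
  · subst hxy
    rw [SimpleGraph.dist_self]
    push_cast
    positivity
  · have hxyB : (⟨x.1, hAB x.2⟩ : ↥B) ≠ ⟨y.1, hAB y.2⟩ := by
      intro h
      exact hxy (Subtype.ext (congrArg (Subtype.val : ↥B → V) h))
    have hrB := reachable_incl hAB hr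
    have hn1 : 0 < (G.induce B).dist ⟨x.1, hAB x.2⟩ ⟨y.1, hAB y.2⟩ :=
      hrB.pos_dist_of_ne hxyB
    have hnr1 : (1:ℝ) ≤ ((G.induce B).dist ⟨x.1, hAB x.2⟩ ⟨y.1, hAB y.2⟩ : ℕ) := by
      exact_mod_cast hn1
    obtain ⟨q, hq'⟩ := hr.exists_walk_length_eq_dist
    have hq : q.length = (G.induce A).dist x y := hq'
    set ψ : ℕ → ℝ := fun i => φ ⟨(q.getVert i).1, hAB (q.getVert i).2⟩ with hψdef
    have hψ : ∀ i, ψ i = φ ⟨(q.getVert i).1, hAB (q.getVert i).2⟩ := fun _ => rfl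
    have hsep : ∀ i j, i ≤ q.length → j ≤ q.length → i ≠ j → 1 ≤ |ψ i - ψ j| := by
      have key : ∀ i j, i < j → j ≤ q.length → 1 ≤ |ψ i - ψ j| := by
        intro i j h1 h2
        have hne := getVert_ne q hq h1 h2
        refine hP3 _ _ ?_
        intro hh
        exact hne (Subtype.ext (congrArg (Subtype.val : ↥B → V) hh))
      intro i j hi hj hij
      rcases lt_or_gt_of_ne hij with h | h
      · exact key i j h hj
      · rw [abs_sub_comm]; exact key j i h hi
    set s : Finset ℝ := (Finset.range (q.length+1)).image ψ with hs
    have hsne : s.Nonempty := ⟨ψ 0, Finset.mem_image.mpr ⟨0, by simp, rfl⟩⟩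
    set M := s.max' hsne with hMdef
    set m := s.min' hsne with hmdef
    have hmemM : ∃ t, t ≤ q.length ∧ ψ t = M := by
      obtain ⟨i, hi, hie⟩ := Finset.mem_image.mp (s.max'_mem hsne)
      exact ⟨i, by have := Finset.mem_range.mp hi; omega, hie⟩
    have hmemm : ∃ t, t ≤ q.length ∧ ψ t = m := by
      obtain ⟨i, hi, hie⟩ := Finset.mem_image.mp (s.min'_mem hsne)
      exact ⟨i, by have := Finset.mem_range.mp hi; omega, hie⟩
    have hM : ∀ i, i ≤ q.length → ψ i ≤ M :=
      fun i hi => s.le_max' _ (Finset.mem_image.mpr ⟨i, Finset.mem_range.mpr (by omega), rfl⟩)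
    have hm : ∀ i, i ≤ q.length → m ≤ ψ i :=
      fun i hi => s.min'_le _ (Finset.mem_image.mpr ⟨i, Finset.mem_range.mpr (by omega), rfl⟩)
    have hcard : s.card = q.length + 1 := by
      rw [hs, Finset.card_image_of_injOn, Finset.card_range]
      intro i hi j hj hij
      by_contra hne
      have := hsep i j (by have := Finset.mem_range.mp hi; omega)
        (by have := Finset.mem_range.mp hj; omega) hne
      rw [hij] at this
      simp at this
      linarith
    have hsepS : ∀ a ∈ s, ∀ b ∈ s, a ≠ b → 1 ≤ |a - b| := by
      intro a ha b hb hab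
      obtain ⟨i, hi, rfl⟩ := Finset.mem_image.mp ha
      obtain ⟨j, hj, rfl⟩ := Finset.mem_image.mp hb
      exact hsep i j (by have := Finset.mem_range.mp hi; omega)
        (by have := Finset.mem_range.mp hj; omega) (by rintro rfl; exact hab rfl)
    have hLMm : (q.length : ℝ) ≤ M - m := by
      have := sep_card s hsepS hsne
      rw [hcard] at this
      push_cast at this
      linarith
    have hgv0 : q.getVert 0 = x := q.getVert_zero
    have hgvL : q.getVert q.length = y := q.getVert_length
    have hψ0 : ψ 0 = φ ⟨x.1, hAB x.2⟩ := by rw [hψ 0]; congr 1; rw [hgv0]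
    have hψL : ψ q.length = φ ⟨y.1, hAB y.2⟩ := by rw [hψ q.length]; congr 1; rw [hgvL]
    have hend : |ψ 0 - ψ q.length| ≤
        c * ((G.induce B).dist ⟨x.1, hAB x.2⟩ ⟨y.1, hAB y.2⟩ : ℕ) := by
      rw [hψ0, hψL]
      exact (hP1 _ _ hrB).2
    have hdistL : ((G.induce A).dist x y : ℝ) = (q.length : ℝ) := by rw [← hq]
    by_cases hgap : 2*c^2 + c ≤ M - m
    · have htop := core_top G A B hAB U c hc φ hP1 hmem q hq ψ hψ M m hM hm hmemM hmemm hgap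
      have hP1' : ∀ x y : ↥B, (G.induce B).Reachable x y →
          ((G.induce B).dist x y : ℝ) ≤ |(-φ x) - (-φ y)| ∧
          |(-φ x) - (-φ y)| ≤ c * (G.induce B).dist x y := by
        intro v w hvw
        rw [show (-φ v) - (-φ w) = -(φ v - φ w) by ring, abs_neg]
        exact hP1 v w hvw
      have hmem' : ∀ v : ↥B, (v.1 ∈ A ↔ ∀ u : ↥B, u.1 ∈ U → c < |(-φ v) - (-φ u)|) := by
        intro v
        rw [hmem v]
        constructor <;> intro h u hu <;> have := h u hu
        · rwa [show (-φ v) - (-φ u) = -(φ v - φ u) by ring, abs_neg]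
        · rwa [show (-φ v) - (-φ u) = -(φ v - φ u) by ring, abs_neg] at this
      obtain ⟨tm0, htm0, htm0e⟩ := hmemm
      obtain ⟨tM0, htM0, htM0e⟩ := hmemM
      have hbot := core_top G A B hAB U c hc (fun v => -φ v) hP1' hmem' q hq
        (fun i => -ψ i) (fun i => by simp [hψ i]) (-m) (-M)
        (fun i hi => neg_le_neg (hm i hi)) (fun i hi => neg_le_neg (hM i hi))
        ⟨tm0, htm0, by show -ψ tm0 = -m; rw [htm0e]⟩ ⟨tM0, htM0, by show -ψ tM0 = -M; rw [htM0e]⟩ (by ring_nf; ring_nf at hgap; linarith)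
      rw [max_neg_neg] at hbot
      have hmaxmin : max (ψ 0) (ψ q.length) - min (ψ 0) (ψ q.length)
          = |ψ 0 - ψ q.length| := by rw [abs_sub_comm]; exact max_sub_min_eq_abs _ _
      rw [hdistL]
      have h1 : (q.length : ℝ) ≤ c * ((G.induce B).dist ⟨x.1, hAB x.2⟩ ⟨y.1, hAB y.2⟩ : ℕ)
          + 2*c^2 + 2*c := by linarith
      nlinarith [mul_nonneg (mul_nonneg (by linarith : (0:ℝ) ≤ 2*c-1) (by linarith : (0:ℝ) ≤ c-1))
          (by linarith : (0:ℝ) ≤ ((G.induce B).dist ⟨x.1, hAB x.2⟩ ⟨y.1, hAB y.2⟩ : ℕ) - 1),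
        mul_nonneg (by nlinarith : (0:ℝ) ≤ 4*c^2+1-c)
          (by linarith : (0:ℝ) ≤ ((G.induce B).dist ⟨x.1, hAB x.2⟩ ⟨y.1, hAB y.2⟩ : ℕ) - 1)]
    · rw [hdistL]
      push_neg at hgap
      nlinarith [mul_nonneg (by nlinarith : (0:ℝ) ≤ 4*c^2+1-c)
          (by linarith : (0:ℝ) ≤ ((G.induce B).dist ⟨x.1, hAB x.2⟩ ⟨y.1, hAB y.2⟩ : ℕ) - 1)]
end AuxMain


def OutlierEmb {V : Type*} [Fintype V] (G : SimpleGraph V) (S : Set V)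
    (κ : ℝ) (c : ℝ) : Prop :=
  ∃ K : Set V, K ⊆ S ∧ (K.ncard : ℝ) ≤ κ ∧
    ∃ f : ↥(S \ K) → ℝ, ∀ x y : ↥(S \ K),
      (G.induce (S \ K)).Reachable x y →
        ((G.induce (S \ K)).dist x y : ℝ) ≤ |f x - f y| ∧
        |f x - f y| ≤ c * (G.induce (S \ K)).dist x y

/-- **Repairing Lemma.** If `G` admits a `(k,c)`-embedding into
the line, then for any `U ⊆ V(G)` the graph `G \ U` admits a
`((2c+1)|U| + k, 4c³ + c)`-embedding into the line. -/
theorem repairing_lemma {V : Type*} [Fintype V]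
    (G : SimpleGraph V) (k : ℕ) (c : ℝ) (hc : 1 ≤ c)
    (hemb : OutlierEmb G Set.univ (k : ℝ) c) :
    ∀ U : Set V,
      OutlierEmb G Uᶜ ((2 * c + 1) * U.ncard + k) (4 * c ^ 3 + c) := by
  classical
  obtain ⟨K, _hKsub, hKc, f, hf⟩ := hemb
  intro U
  have hc0 : (0:ℝ) < c := by linarith
  letI : Fintype ↥(Set.univ \ K) := Fintype.ofFinite _
  haveI : Finite ((G.induce (Set.univ \ K)).ConnectedComponent) := Quot.finite _
  obtain ⟨nc, ⟨e⟩⟩ := Finite.exists_equiv_fin ((G.induce (Set.univ \ K)).ConnectedComponent)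
  set CB : ℝ := ∑ v : ↥(Set.univ \ K), |f v| with hCB
  have hCBle : ∀ v : ↥(Set.univ \ K), |f v| ≤ CB :=
    fun v => Finset.single_le_sum (fun i _ => abs_nonneg (f i)) (Finset.mem_univ v)
  have hCB0 : 0 ≤ CB := Finset.sum_nonneg (fun i _ => abs_nonneg (f i))
  set MM : ℝ := 2*c + 1 + 2*CB with hMM
  set φ : ↥(Set.univ \ K) → ℝ :=
    fun v => f v + ((e ((G.induce (Set.univ \ K)).connectedComponentMk v) : Fin nc) : ℕ) * MM with hφ
  -- same component: φ difference = f difference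
  have hsame : ∀ v w : ↥(Set.univ \ K), (G.induce (Set.univ \ K)).Reachable v w → φ v - φ w = f v - f w := by
    intro v w hr
    have hcc : (G.induce (Set.univ \ K)).connectedComponentMk v = (G.induce (Set.univ \ K)).connectedComponentMk w :=
      SimpleGraph.ConnectedComponent.eq.mpr hr
    rw [hφ]
    simp only [hcc]
    ring
  have hP1 : ∀ v w : ↥(Set.univ \ K), (G.induce (Set.univ \ K)).Reachable v w →
      ((G.induce (Set.univ \ K)).dist v w : ℝ) ≤ |φ v - φ w| ∧
      |φ v - φ w| ≤ c * (G.induce (Set.univ \ K)).dist v w := by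
    intro v w hr
    rw [show φ v - φ w = f v - f w from hsame v w hr]
    exact hf v w hr
  have hP2 : ∀ v w : ↥(Set.univ \ K), ¬ (G.induce (Set.univ \ K)).Reachable v w → 2*c + 1 ≤ |φ v - φ w| := by
    intro v w hr
    obtain ⟨a, ha⟩ : ∃ a : ℕ, a = ((e ((G.induce (Set.univ \ K)).connectedComponentMk v) : Fin nc) : ℕ) := ⟨_, rfl⟩
    obtain ⟨b, hb⟩ : ∃ b : ℕ, b = ((e ((G.induce (Set.univ \ K)).connectedComponentMk w) : Fin nc) : ℕ) := ⟨_, rfl⟩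
    have hab : a ≠ b := by
      rw [ha, hb]
      intro h
      apply hr
      have h1 : (e ((G.induce (Set.univ \ K)).connectedComponentMk v) : Fin nc)
          = e ((G.induce (Set.univ \ K)).connectedComponentMk w) := Fin.ext h
      have h2 := e.injective h1
      exact SimpleGraph.ConnectedComponent.eq.mp h2
    have h1 : (1:ℝ) ≤ |(a:ℝ) - (b:ℝ)| := by
      have : (1:ℤ) ≤ |(a:ℤ) - (b:ℤ)| := by
        refine Int.one_le_abs ?_
        omega
      exact_mod_cast this
    have hMM0 : 0 ≤ MM := by rw [hMM]; linarith
    have hdd : |((a:ℝ) - b) * MM| = |(a:ℝ) - b| * MM := by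
      rw [abs_mul, abs_of_nonneg hMM0]
    have hfvw : |f v - f w| ≤ 2*CB := by
      calc |f v - f w| ≤ |f v| + |f w| := abs_sub _ _
      _ ≤ 2*CB := by linarith [hCBle v, hCBle w]
    have hkey : |((a:ℝ) - b) * MM| ≤ |φ v - φ w| + |f v - f w| := by
      have : ((a:ℝ) - b) * MM = (φ v - φ w) - (f v - f w) := by
        rw [hφ, ha, hb]; push_cast; ring
      rw [this]
      exact abs_sub _ _
    have : MM ≤ |((a:ℝ) - b) * MM| := by
      rw [hdd]
      nlinarith
    rw [hMM] at this
    linarith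
  have hP3 : ∀ v w : ↥(Set.univ \ K), v ≠ w → 1 ≤ |φ v - φ w| := by
    intro v w hne
    by_cases hr : (G.induce (Set.univ \ K)).Reachable v w
    · have hd := hr.pos_dist_of_ne hne
      have : (1:ℝ) ≤ ((G.induce (Set.univ \ K)).dist v w : ℕ) := by exact_mod_cast hd
      linarith [(hP1 v w hr).1]
    · linarith [hP2 v w hr]
  -- the surviving set A
  set A : Set V := {v : V | ∃ hv : v ∈ (Set.univ \ K),
      ∀ u : ↥(Set.univ \ K), u.1 ∈ U → c < |φ ⟨v, hv⟩ - φ u|} with hA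
  have hAB : A ⊆ (Set.univ \ K) := fun v hv => hv.1
  have hmemA : ∀ v : ↥(Set.univ \ K), (v.1 ∈ A ↔ ∀ u : ↥(Set.univ \ K), u.1 ∈ U → c < |φ v - φ u|) := by
    intro v
    constructor
    · rintro ⟨hv, h⟩
      exact h
    · intro h
      exact ⟨v.2, h⟩
  have hAU : A ⊆ Uᶜ := by
    rintro v ⟨hv, h⟩
    intro hvU
    have := h ⟨v, hv⟩ hvU
    simp at this
    linarith
  refine ⟨Uᶜ \ A, Set.diff_subset, ?_, ?_⟩
  · -- cardinality bound
    have hsub : Uᶜ \ A ⊆ K ∪ ((Set.univ \ K) \ A) := by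
      rintro v ⟨hv1, hv2⟩
      by_cases hK : v ∈ K
      · exact Or.inl hK
      · exact Or.inr ⟨⟨trivial, hK⟩, hv2⟩
    have h1 : (Uᶜ \ A).ncard ≤ K.ncard + ((Set.univ \ K) \ A).ncard :=
      le_trans (Set.ncard_le_ncard hsub (Set.toFinite _)) (Set.ncard_union_le _ _)
    set DD : Set ↥(Set.univ \ K) :=
      {v | ∃ u : ↥(Set.univ \ K), u.1 ∈ U ∧ |φ v - φ u| ≤ c} with hDD
    have hBadsub : (Set.univ \ K) \ A ⊆ Subtype.val '' DD := by
      rintro v ⟨hv, hvA⟩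
      have hnot : ¬ ∀ u : ↥(Set.univ \ K), u.1 ∈ U → c < |φ ⟨v, hv⟩ - φ u| := by
        intro h
        exact hvA ((hmemA ⟨v, hv⟩).mpr h)
      push_neg at hnot
      obtain ⟨u, hu1, hu2⟩ := hnot
      exact ⟨⟨v, hv⟩, ⟨u, hu1, hu2⟩, rfl⟩
    have h2 : ((Set.univ \ K) \ A).ncard ≤ DD.ncard :=
      le_trans (Set.ncard_le_ncard hBadsub (Set.toFinite _))
        (le_of_eq (Set.ncard_image_of_injective _ Subtype.val_injective))
    set TUfin : Finset ↥(Set.univ \ K) := Finset.univ.filter (fun u => u.1 ∈ U) with hTU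
    set Dufin : ↥(Set.univ \ K) → Finset ↥(Set.univ \ K) :=
      fun u => Finset.univ.filter (fun v => |φ v - φ u| ≤ c) with hDu
    have hDDsub : DD ⊆ ↑(TUfin.biUnion Dufin) := by
      rintro v ⟨u, hu1, hu2⟩
      simp only [Finset.coe_biUnion, Set.mem_iUnion, Finset.mem_coe, Finset.mem_filter,
        Finset.mem_univ, true_and, hDu, hTU]
      exact ⟨u, hu1, hu2⟩
    have h3 : DD.ncard ≤ (TUfin.biUnion Dufin).card :=
      le_trans (Set.ncard_le_ncard hDDsub (Set.toFinite _))
        (le_of_eq (Set.ncard_coe_finset _))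
    have h4 : (TUfin.biUnion Dufin).card ≤ ∑ u ∈ TUfin, (Dufin u).card :=
      Finset.card_biUnion_le
    have h5 : ∀ u ∈ TUfin, ((Dufin u).card : ℝ) ≤ 2*c + 1 := by
      intro u _
      by_cases hne : (Dufin u).Nonempty
      · have hsepT : ∀ a ∈ (Dufin u).image φ, ∀ b ∈ (Dufin u).image φ, a ≠ b → 1 ≤ |a - b| := by
          intro a ha b hb hab
          obtain ⟨p, hp, rfl⟩ := Finset.mem_image.mp ha
          obtain ⟨q, hq, rfl⟩ := Finset.mem_image.mp hb
          exact hP3 p q (by rintro rfl; exact hab rfl)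
        have hinj : Set.InjOn φ ↑(Dufin u) := by
          intro p hp q hq hpq
          by_contra hne'
          have := hP3 p q hne'
          rw [hpq] at this
          simp at this
          linarith
        have hcard : ((Dufin u).image φ).card = (Dufin u).card :=
          Finset.card_image_of_injOn hinj
        have htne : ((Dufin u).image φ).Nonempty := hne.image φ
        have hsc := sep_card _ hsepT htne
        have hmax : ((Dufin u).image φ).max' htne ≤ φ u + c := by
          obtain ⟨p, hp, hpe⟩ := Finset.mem_image.mp (((Dufin u).image φ).max'_mem htne)
          have h := abs_le.mp (Finset.mem_filter.mp hp).2
          rw [← hpe]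
          linarith [h.1, h.2]
        have hmin : φ u - c ≤ ((Dufin u).image φ).min' htne := by
          obtain ⟨p, hp, hpe⟩ := Finset.mem_image.mp (((Dufin u).image φ).min'_mem htne)
          have h := abs_le.mp (Finset.mem_filter.mp hp).2
          rw [← hpe]
          linarith [h.1, h.2]
        rw [← hcard]
        linarith
      · rw [Finset.not_nonempty_iff_eq_empty.mp hne]
        simp
        linarith
    have h7 : (TUfin.card : ℝ) ≤ (U.ncard : ℝ) := by
      have hval : (Subtype.val '' {u : ↥(Set.univ \ K) | u.1 ∈ U}) ⊆ U := by
        rintro _ ⟨u, hu, rfl⟩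
        exact hu
      have e1 : (↑TUfin : Set ↥(Set.univ \ K)) = {u : ↥(Set.univ \ K) | u.1 ∈ U} := by
        ext u
        simp [hTU]
      have e2 : TUfin.card = ({u : ↥(Set.univ \ K) | u.1 ∈ U}).ncard := by
        rw [← e1, Set.ncard_coe_finset]
      have e3 : ({u : ↥(Set.univ \ K) | u.1 ∈ U}).ncard
          = (Subtype.val '' {u : ↥(Set.univ \ K) | u.1 ∈ U}).ncard :=
        (Set.ncard_image_of_injective _ Subtype.val_injective).symm
      have e4 := Set.ncard_le_ncard hval (Set.toFinite _)
      rw [e2, e3]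
      exact_mod_cast e4
    have hN : (Uᶜ \ A).ncard ≤ K.ncard + ∑ u ∈ TUfin, (Dufin u).card := by omega
    have hNR : ((Uᶜ \ A).ncard : ℝ) ≤ (K.ncard : ℝ) + ((∑ u ∈ TUfin, (Dufin u).card : ℕ) : ℝ) := by
      exact_mod_cast hN
    have h6 : ((∑ u ∈ TUfin, (Dufin u).card : ℕ) : ℝ) ≤ (TUfin.card : ℝ) * (2*c+1) := by
      push_cast
      calc ∑ u ∈ TUfin, ((Dufin u).card : ℝ) ≤ ∑ _u ∈ TUfin, (2*c+1) :=
            Finset.sum_le_sum h5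
        _ = TUfin.card * (2*c+1) := by rw [Finset.sum_const, nsmul_eq_mul]
    have h8 : (TUfin.card : ℝ) * (2*c+1) ≤ (2*c+1) * (U.ncard : ℝ) := by
      rw [mul_comm]
      exact mul_le_mul_of_nonneg_left h7 (by linarith)
    linarith [hKc]
  · -- distortion bound
    have hUA : Uᶜ \ (Uᶜ \ A) = A := by
      ext v
      simp only [Set.mem_diff, Set.mem_compl_iff]
      constructor
      · rintro ⟨h1, h2⟩
        by_contra hna
        exact h2 ⟨h1, hna⟩
      · intro hA'
        exact ⟨hAU hA', fun h => h.2 hA'⟩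
    rw [hUA]
    refine ⟨fun v => (4*c^2+1) * φ ⟨v.1, hAB v.2⟩, ?_⟩
    intro x y hreach
    have hmain := main_bound G A (Set.univ \ K) hAB U c hc φ hP1 hP3 hmemA x y hreach
    have hrB := reachable_incl (G := G) hAB hreach
    have hlow := (hP1 _ _ hrB).1
    have hup := (hP1 _ _ hrB).2
    have hdle : ((G.induce (Set.univ \ K)).dist ⟨x.1, hAB x.2⟩ ⟨y.1, hAB y.2⟩ : ℝ)
        ≤ ((G.induce A).dist x y : ℕ) := by
      exact_mod_cast dist_incl_le (G := G) hAB hreach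
    have hco : (0:ℝ) < 4*c^2+1 := by positivity
    have habs : |(4*c^2+1) * φ ⟨x.1, hAB x.2⟩ - (4*c^2+1) * φ ⟨y.1, hAB y.2⟩|
        = (4*c^2+1) * |φ ⟨x.1, hAB x.2⟩ - φ ⟨y.1, hAB y.2⟩| := by
      rw [show (4*c^2+1) * φ ⟨x.1, hAB x.2⟩ - (4*c^2+1) * φ ⟨y.1, hAB y.2⟩
          = (4*c^2+1) * (φ ⟨x.1, hAB x.2⟩ - φ ⟨y.1, hAB y.2⟩) by ring,
        abs_mul, abs_of_pos hco]
    constructor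
    · rw [habs]
      calc ((G.induce A).dist x y : ℝ)
          ≤ (4*c^2+1) * ((G.induce (Set.univ \ K)).dist ⟨x.1, hAB x.2⟩ ⟨y.1, hAB y.2⟩ : ℕ) := hmain
        _ ≤ (4*c^2+1) * |φ ⟨x.1, hAB x.2⟩ - φ ⟨y.1, hAB y.2⟩| :=
            mul_le_mul_of_nonneg_left hlow (le_of_lt hco)
    · rw [habs]
      calc (4*c^2+1) * |φ ⟨x.1, hAB x.2⟩ - φ ⟨y.1, hAB y.2⟩|
          ≤ (4*c^2+1) * (c * ((G.induce (Set.univ \ K)).dist ⟨x.1, hAB x.2⟩ ⟨y.1, hAB y.2⟩ : ℕ)) :=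
            mul_le_mul_of_nonneg_left hup (le_of_lt hco)
        _ ≤ (4*c^2+1) * (c * ((G.induce A).dist x y : ℕ)) := by
            refine mul_le_mul_of_nonneg_left ?_ (le_of_lt hco)
            exact mul_le_mul_of_nonneg_left hdle (le_of_lt hc0)
        _ = (4*c^3+c) * ((G.induce A).dist x y : ℕ) := by ring
end

section
/- Let G be a connected graph, R > 0, N an R-net of G, 𝒫 an R-partition centered at N, and H the R-minor induced by 𝒫. Let u, v ∈ N and let P be a shortest u–v path in G. If J = {w ∈ N : P ∩ 𝒫(w) ≠ ∅} is the set of clusters visited by P, then d_H(u,v) ≤ |J| − 1 ≤ length(P) = d_G(u,v). -/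
theorem List.ncard_setOf_mem_le {α : Type*} (l : List α) : {x | x ∈ l}.ncard ≤ l.length := by
  classical
  rw [← List.coe_toFinset, Set.ncard_coe_finset]
  exact l.toFinset_card_le

theorem List.ncard_setOf_mem_of_nodup {α : Type*} {l : List α} (hl : l.Nodup) :
    {x | x ∈ l}.ncard = l.length := by
  classical
  rw [← List.coe_toFinset, Set.ncard_coe_finset, List.toFinset_card_of_nodup hl]

namespace SimpleGraph

variable {V W : Type*} {G : SimpleGraph V} {H : SimpleGraph W}

theorem dist_le_ncard_sub_one_of_support_subset {x y : W} (p : H.Walk x y) {S : Set W}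
    (hS : S.Finite) (hp : ∀ w ∈ p.support, w ∈ S) : H.dist x y ≤ S.ncard - 1 := by
  classical
  let q := p.toPath.val
  have hsub : {w | w ∈ q.support} ⊆ S := fun w hw =>
    hp w (p.support_toPath_subset_support hw)
  have hq : q.length + 1 ≤ S.ncard := by
    rw [← Walk.length_support, ← List.ncard_setOf_mem_of_nodup p.toPath.prop.support_nodup]
    exact Set.ncard_le_ncard hsub hS
  have := dist_le q
  omega

theorem Walk.exists_walk_support_subset_image (f : V → W)
    (hf : ∀ a b, G.Adj a b → f a ≠ f b → H.Adj (f a) (f b)) {a b : V} (p : G.Walk a b) :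
    ∃ q : H.Walk (f a) (f b), ∀ w ∈ q.support, w ∈ f '' {x | x ∈ p.support} := by
  induction p with
  | nil => exact ⟨.nil, by simp⟩
  | @cons a c b hac p ih =>
    obtain ⟨q, hq⟩ := ih
    have hmono : f '' {x | x ∈ p.support} ⊆ f '' {x | x ∈ (Walk.cons hac p).support} :=
      Set.image_mono fun x hx => List.mem_cons_of_mem a hx
    by_cases hfac : f a = f c
    · refine ⟨q.copy hfac.symm rfl, fun w hw => hmono (hq w ?_)⟩
      rwa [Walk.support_copy] at hw
    · refine ⟨.cons (hf a c hac hfac) q, fun w hw => ?_⟩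
      rcases List.mem_cons.mp hw with rfl | hw
      · exact ⟨a, List.mem_cons_self, rfl⟩
      · exact hmono (hq w hw)

theorem dist_le_ncard_image_support_sub_one (f : V → W)
    (hf : ∀ a b, G.Adj a b → f a ≠ f b → H.Adj (f a) (f b)) {a b : V} (p : G.Walk a b) :
    H.dist (f a) (f b) ≤ (f '' {x | x ∈ p.support}).ncard - 1 := by
  obtain ⟨q, hq⟩ := p.exists_walk_support_subset_image f hf
  exact dist_le_ncard_sub_one_of_support_subset q ((List.finite_toSet _).image f) hq

theorem ncard_image_support_sub_one_le_length (f : V → W) {a b : V} (p : G.Walk a b) :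
    (f '' {x | x ∈ p.support}).ncard - 1 ≤ p.length := by
  have := (Set.ncard_image_le (f := f) (List.finite_toSet p.support)).trans
    p.support.ncard_setOf_mem_le
  rw [Walk.length_support] at this
  omega

theorem voronoiMinor_adj_of_adj {N : Set V} {center : V → V} (hcen : ∀ v, center v ∈ N)
    {a b : V} (hab : G.Adj a b) (hne : center a ≠ center b) :
    (voronoiMinor G N center).Adj ⟨center a, hcen a⟩ ⟨center b, hcen b⟩ :=
  ⟨fun h => hne (congrArg Subtype.val h), a, b, hab, rfl, rfl⟩

end SimpleGraph

open SimpleGraph in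
theorem minor_dist_via_visited_clusters_general {V : Type*}
    (G : SimpleGraph V)
    (N : Set V) (center : V → V)
    (hcen : ∀ v : V, center v ∈ N)
    (hfix : ∀ y ∈ N, center y = y)
    (u v : V) (hu : u ∈ N) (hv : v ∈ N)
    (P : G.Walk u v) :
    (voronoiMinor G N center).dist ⟨u, hu⟩ ⟨v, hv⟩ ≤
        {w : N | ∃ x ∈ P.support, center x = (w : V)}.ncard - 1 ∧
      {w : N | ∃ x ∈ P.support, center x = (w : V)}.ncard - 1 ≤ P.length := by
  let cluster : V → N := fun x => ⟨center x, hcen x⟩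
  have hcluster : ∀ a b, G.Adj a b → cluster a ≠ cluster b →
      (voronoiMinor G N center).Adj (cluster a) (cluster b) := fun a b hab hne =>
    voronoiMinor_adj_of_adj hcen hab fun h => hne (Subtype.ext h)
  have hJ : {w : N | ∃ x ∈ P.support, center x = (w : V)} = cluster '' {x | x ∈ P.support} := by
    ext w
    simp [cluster, Subtype.ext_iff]
  have hu' : cluster u = ⟨u, hu⟩ := Subtype.ext (hfix u hu)
  have hv' : cluster v = ⟨v, hv⟩ := Subtype.ext (hfix v hv)
  rw [hJ, ← hu', ← hv']
  exact ⟨dist_le_ncard_image_support_sub_one cluster hcluster P,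
    ncard_image_support_sub_one_le_length cluster P⟩

/-- Let `H` be the `R`-minor of a connected graph `G` induced
by an `R`-net `N` and an `R`-partition `𝒫` (the fibers of `center`). Let
`u, v ∈ N`, let `P` be a shortest `u`–`v` path in `G`, and let
`J = {w ∈ N : P ∩ 𝒫(w) ≠ ∅}` be the set of clusters visited by `P`. Then
`d_H(u,v) ≤ |J| − 1 ≤ length(P) = d_G(u,v)`. -/
theorem minor_dist_via_visited_clusters {V : Type*} [Fintype V]
    (G : SimpleGraph V) (hG : G.Connected) (R : ℕ) (hR : 0 < R)
    (N : Set V) (center : V → V)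
    (hsep : ∀ u ∈ N, ∀ v ∈ N, u ≠ v → R < G.dist u v)
    (hcov : ∀ v : V, ∃ y ∈ N, G.dist v y ≤ R)
    (hcen : ∀ v : V, center v ∈ N)
    (hfix : ∀ y ∈ N, center y = y)
    (hnear : ∀ v : V, ∀ y ∈ N, G.dist v (center v) ≤ G.dist v y)
    (hrad : ∀ v : V, G.dist v (center v) ≤ R)
    (hconn : ∀ y ∈ N, (G.induce {v : V | center v = y}).Connected)
    (u v : V) (hu : u ∈ N) (hv : v ∈ N)
    (P : G.Walk u v) (hP : P.length = G.dist u v) :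
    (voronoiMinor G N center).dist ⟨u, hu⟩ ⟨v, hv⟩ ≤
        {w : N | ∃ x ∈ P.support, center x = (w : V)}.ncard - 1 ∧
      {w : N | ∃ x ∈ P.support, center x = (w : V)}.ncard - 1 ≤ P.length :=
  minor_dist_via_visited_clusters_general G N center hcen hfix u v hu hv P
end
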